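/- arXiv:1508.00614 — 2 statements merged into one kernel-verified Lean document; each statement's English description precedes it below -/
import Mathlib

section
/- The map T from stable matchings of G' to dominant matchings of G is surjective: for every dominant matching M in G there exists a stable matching M' in G' with T(M') = M. -/
open Classical

/-- A bipartite graph `G = (A ∪ B, E)` with strict preference lists:
`adj` is the edge relation, and each vertex ranks its neighbors by a rank
function (lower rank = more preferred), injective on neighbors. -/
structure PrefSys (A B : Type) where
  adj : A → B → Prop
  rankA : A → B → ℕ
  rankB : B → A → ℕ
  rankA_inj : ∀ a b b', adj a b → adj a b' → rankA a b = rankA a b' → b = b'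
  rankB_inj : ∀ b a a', adj a b → adj a' b → rankB b a = rankB b a' → a = a'

namespace PrefSys

variable {A B : Type} (P : PrefSys A B)

/-- `M` is a matching of `G`: a set of edges, no two sharing a vertex. -/
def IsMatching (M : Finset (A × B)) : Prop :=
  (∀ p ∈ M, P.adj p.1 p.2) ∧
  (∀ p ∈ M, ∀ q ∈ M, p.1 = q.1 → p = q) ∧
  (∀ p ∈ M, ∀ q ∈ M, p.2 = q.2 → p = q)

/-- Vertex `a ∈ A` prefers matching `M` to matching `M'`:
`a` is matched in `M` and either unmatched in `M'` or matched to a strictly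
worse partner in `M'`. -/
def prefA (M M' : Finset (A × B)) (a : A) : Prop :=
  ∃ b, (a, b) ∈ M ∧ ∀ b', (a, b') ∈ M' → P.rankA a b < P.rankA a b'

/-- Vertex `b ∈ B` prefers matching `M` to matching `M'`. -/
def prefB (M M' : Finset (A × B)) (b : B) : Prop :=
  ∃ a, (a, b) ∈ M ∧ ∀ a', (a', b) ∈ M' → P.rankB b a < P.rankB b a'

/-- `φ(M, M')`: the number of vertices preferring `M` to `M'`. -/
noncomputable def phi (M M' : Finset (A × B)) : ℕ :=
  Nat.card {a : A // P.prefA M M' a} + Nat.card {b : B // P.prefB M M' b}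

/-- A matching is popular if it never loses a head-to-head election. -/
def Popular (M : Finset (A × B)) : Prop :=
  P.IsMatching M ∧ ∀ M', P.IsMatching M' → P.phi M' M ≤ P.phi M M'

/-- `a`'s vote on the edge `(a,b)` versus its `M`-partner is `+`. -/
def voteAplus (M : Finset (A × B)) (a : A) (b : B) : Prop :=
  ∀ b', (a, b') ∈ M → P.rankA a b < P.rankA a b'

/-- `b`'s vote on the edge `(a,b)` versus its `M`-partner is `+`. -/
def voteBplus (M : Finset (A × B)) (a : A) (b : B) : Prop :=
  ∀ a', (a', b) ∈ M → P.rankB b a < P.rankB b a'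

/-- `(a,b)` is a blocking edge (an edge outside `M` labeled `(+,+)`). -/
def Blocking (M : Finset (A × B)) (a : A) (b : B) : Prop :=
  P.adj a b ∧ (a, b) ∉ M ∧ P.voteAplus M a b ∧ P.voteBplus M a b

/-- A stable matching: a matching with no blocking edge. -/
def Stable (M : Finset (A × B)) : Prop :=
  P.IsMatching M ∧ ∀ a b, ¬ P.Blocking M a b

/-- A dominant matching: popular, and more popular than every larger matching. -/
def Dominant (M : Finset (A × B)) : Prop :=
  P.Popular M ∧ ∀ M', P.IsMatching M' → M.card < M'.card → P.phi M' M < P.phi M M'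

/-- The edge `(a,b)` survives in the subgraph `G_M` (i.e. it is an edge of `G`
that is in `M` or is not labeled `(-,-)`). -/
def inGM (M : Finset (A × B)) (a : A) (b : B) : Prop :=
  P.adj a b ∧ ((a, b) ∈ M ∨ P.voteAplus M a b ∨ P.voteBplus M a b)

end PrefSys

namespace PrefSys

/-- The auxiliary graph `G'` of `G`: men come in two copies `a₀` (`Sum.inl a`)
and `a₁` (`Sum.inr a`); women are the original women `b` (`Sum.inl b`) together
with a dummy woman `d(a)` (`Sum.inr a`) for each man `a`.  `d(a)` is adjacent
only to `a₀` and `a₁` and prefers `a₀`; `a₀` ranks `a`'s neighbors in `a`'s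
original order followed last by `d(a)`; `a₁` ranks `d(a)` first and then `a`'s
neighbors in original order; each woman `b` prefers every level-1 man to every
level-0 man, each level ordered by `b`'s original preferences. -/
noncomputable def aux {A B : Type} [Fintype A] [Fintype B] (P : PrefSys A B) :
    PrefSys (A ⊕ A) (B ⊕ A) where
  adj x y :=
    match x, y with
    | .inl a, .inl b => P.adj a b
    | .inl a, .inr a' => a' = a
    | .inr a, .inl b => P.adj a b
    | .inr a, .inr a' => a' = a
  rankA x y :=
    match x, y with
    | .inl a, .inl b => P.rankA a b
    | .inl a, .inr _ => (Finset.univ.sup (P.rankA a)) + 1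
    | .inr a, .inl b => P.rankA a b + 1
    | .inr _, .inr _ => 0
  rankB y x :=
    match y, x with
    | .inl b, .inl a => P.rankB b a + (Finset.univ.sup (P.rankB b)) + 1
    | .inl b, .inr a => P.rankB b a
    | .inr _, .inl _ => 0
    | .inr _, .inr _ => 1
  rankA_inj := by
    rintro (a | a) (b | a') (b' | a'') h1 h2 heq <;> dsimp only at h1 h2 heq ⊢
    · exact congrArg Sum.inl (P.rankA_inj a b b' h1 h2 heq)
    · exfalso
      have := Finset.le_sup (f := P.rankA a) (Finset.mem_univ b); omega
    · exfalso
      have := Finset.le_sup (f := P.rankA a) (Finset.mem_univ b'); omega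
    · rw [h1, h2]
    · exact congrArg Sum.inl (P.rankA_inj a b b' h1 h2 (by omega))
    · exfalso; omega
    · exfalso; omega
    · rw [h1, h2]
  rankB_inj := by
    rintro (b | a) (a' | a'') (a''' | a'''') h1 h2 heq <;> dsimp only at h1 h2 heq ⊢
    · exact congrArg Sum.inl (P.rankB_inj b a' a''' h1 h2 (by omega))
    · exfalso
      have := Finset.le_sup (f := P.rankB b) (Finset.mem_univ a''''); omega
    · exfalso
      have := Finset.le_sup (f := P.rankB b) (Finset.mem_univ a''); omega
    · exact congrArg Sum.inr (P.rankB_inj b a'' a'''' h1 h2 heq)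
    · rw [← h1, ← h2]
    · exfalso; omega
    · exfalso; omega
    · rw [← h1, ← h2]

/-- The projection of an edge of `G'` to an edge of `G` (dummy edges ↦ none). -/
def proj {A B : Type} : ((A ⊕ A) × (B ⊕ A)) → Option (A × B)
  | (.inl a, .inl b) => some (a, b)
  | (.inr a, .inl b) => some (a, b)
  | _ => none

/-- `T(M')`: delete the edges incident to dummy women and replace each edge
`(aᵢ, b)` with `b ∈ B` by `(a, b)`. -/
noncomputable def Tmap {A B : Type} (M' : Finset ((A ⊕ A) × (B ⊕ A))) :
    Finset (A × B) :=
  (M'.image proj).filterMap id (by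
    intro o o' x hx hx'
    rw [id] at hx hx'
    rw [Option.mem_def] at hx hx'
    rw [hx, hx'])

end PrefSys


namespace PrefSys
set_option linter.unusedSectionVars false
variable {A B : Type} [Fintype A] [Fintype B] (P : PrefSys A B)

/-- combined preference predicate on `A ⊕ B`. -/
def prefV (M N : Finset (A × B)) : A ⊕ B → Prop :=
  Sum.elim (P.prefA M N) (P.prefB M N)

lemma prefV_inl (M N : Finset (A × B)) (a : A) :
    P.prefV M N (Sum.inl a) = P.prefA M N a := rfl

lemma prefV_inr (M N : Finset (A × B)) (b : B) :
    P.prefV M N (Sum.inr b) = P.prefB M N b := rfl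

lemma phi_eq_card (M N : Finset (A × B)) :
    P.phi M N = Nat.card {x : A ⊕ B // P.prefV M N x} := by
  classical
  rw [phi, Nat.card_eq_fintype_card, Nat.card_eq_fintype_card, Nat.card_eq_fintype_card,
    Fintype.card_congr (Equiv.subtypeSum (p := P.prefV M N)), Fintype.card_sum]
  rfl

lemma phi_le_of_inj (M N : Finset (A × B)) (g : A ⊕ B → A ⊕ B)
    (hg : ∀ x, P.prefV M N x → P.prefV N M (g x))
    (hinj : ∀ x y, P.prefV M N x → P.prefV M N y → g x = g y → x = y) :
    P.phi M N ≤ P.phi N M := by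
  classical
  rw [phi_eq_card, phi_eq_card]
  exact Nat.card_le_card_of_injective
    (fun x => ⟨g x.1, hg x.1 x.2⟩)
    (fun x y h => Subtype.ext (hinj x.1 y.1 x.2 y.2 (congrArg Subtype.val h)))

lemma phi_lt_of_inj (M N : Finset (A × B)) (g : A ⊕ B → A ⊕ B)
    (hg : ∀ x, P.prefV M N x → P.prefV N M (g x))
    (hinj : ∀ x y, P.prefV M N x → P.prefV M N y → g x = g y → x = y)
    (w : A ⊕ B) (hw : P.prefV N M w) (hmiss : ∀ x, P.prefV M N x → g x ≠ w) :
    P.phi M N < P.phi N M := by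
  classical
  rw [phi_eq_card, phi_eq_card, Nat.card_eq_fintype_card, Nat.card_eq_fintype_card]
  refine Fintype.card_lt_of_injective_of_notMem
    (fun x => ⟨g x.1, hg x.1 x.2⟩)
    (fun x y h => Subtype.ext (hinj x.1 y.1 x.2 y.2 (congrArg Subtype.val h)))
    (b := ⟨w, hw⟩) ?_
  rintro ⟨x, hx⟩
  exact hmiss x.1 x.2 (congrArg Subtype.val hx)

/-- Popularity contradiction helper. -/
lemma popular_absurd {M : Finset (A × B)} (hM : P.Popular M)
    (N : Finset (A × B)) (hN : P.IsMatching N) (g : A ⊕ B → A ⊕ B)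
    (hg : ∀ x, P.prefV M N x → P.prefV N M (g x))
    (hinj : ∀ x y, P.prefV M N x → P.prefV M N y → g x = g y → x = y)
    (w : A ⊕ B) (hw : P.prefV N M w) (hmiss : ∀ x, P.prefV M N x → g x ≠ w) :
    False := by
  have h1 := hM.2 N hN
  have h2 := P.phi_lt_of_inj M N g hg hinj w hw hmiss
  omega

/-- Dominance contradiction helper. -/
lemma dominant_absurd {M : Finset (A × B)} (hM : P.Dominant M)
    (N : Finset (A × B)) (hN : P.IsMatching N) (hcard : M.card < N.card)
    (g : A ⊕ B → A ⊕ B)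
    (hg : ∀ x, P.prefV M N x → P.prefV N M (g x))
    (hinj : ∀ x y, P.prefV M N x → P.prefV M N y → g x = g y → x = y) :
    False := by
  have h1 := hM.2 N hN hcard
  have h2 := P.phi_le_of_inj M N g hg hinj
  omega


section Helpers
variable {M : Finset (A × B)}

lemma muA (hMm : P.IsMatching M) {x : A} {y y' : B}
    (h : (x, y) ∈ M) (h' : (x, y') ∈ M) : y = y' :=
  congrArg Prod.snd (hMm.2.1 (x, y) h (x, y') h' rfl)

lemma muB (hMm : P.IsMatching M) {x x' : A} {y : B}
    (h : (x, y) ∈ M) (h' : (x', y) ∈ M) : x = x' :=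
  congrArg Prod.fst (hMm.2.2 (x, y) h (x', y) h' rfl)

lemma rank_trichA (hMm : P.IsMatching M) {a : A} {b b0 : B}
    (h0 : (a, b0) ∈ M) (hab : P.adj a b) (hn : (a, b) ∉ M) :
    P.rankA a b < P.rankA a b0 ∨ P.rankA a b0 < P.rankA a b := by
  rcases lt_trichotomy (P.rankA a b) (P.rankA a b0) with h | h | h
  · exact Or.inl h
  · exact absurd (P.rankA_inj a b b0 hab (hMm.1 (a, b0) h0) h ▸ h0) hn
  · exact Or.inr h

lemma rank_trichB (hMm : P.IsMatching M) {a a0 : A} {b : B}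
    (h0 : (a0, b) ∈ M) (hab : P.adj a b) (hn : (a, b) ∉ M) :
    P.rankB b a < P.rankB b a0 ∨ P.rankB b a0 < P.rankB b a := by
  rcases lt_trichotomy (P.rankB b a) (P.rankB b a0) with h | h | h
  · exact Or.inl h
  · exact absurd (P.rankB_inj b a a0 hab (hMm.1 (a0, b) h0) h ▸ h0) hn
  · exact Or.inr h

end Helpers

lemma path_absurd {M : Finset (A × B)} (hdom : P.Dominant M)
    (k : ℕ) (aa : ℕ → A) (bb : ℕ → B)
    (hstep : ∀ i, 1 ≤ i → i ≤ k → (aa i, bb i) ∈ M)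
    (hedge : ∀ i, 1 ≤ i → i ≤ k + 1 →
      P.adj (aa (i-1)) (bb i) ∧ (aa (i-1), bb i) ∉ M ∧
      (P.voteAplus M (aa (i-1)) (bb i) ∨ P.voteBplus M (aa (i-1)) (bb i)))
    (hainj : ∀ i j, i ≤ k → j ≤ k → aa i = aa j → i = j)
    (hfreshB : ∀ i, 1 ≤ i → i ≤ k → bb (k+1) ≠ bb i)
    (Lopt : Option B) (Ropt : Option A)
    (hLn : Lopt = none → ∀ b, (aa 0, b) ∉ M)
    (hLs : ∀ bs, Lopt = some bs → (aa 0, bs) ∈ M ∧ P.Blocking M (aa 0) (bb 1))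
    (hLR : ∀ bs ap, Lopt = some bs → Ropt = some ap → 1 ≤ k)
    (hRn : Ropt = none → ∀ a, (a, bb (k+1)) ∉ M)
    (hRs : ∀ ap, Ropt = some ap → (ap, bb (k+1)) ∈ M ∧ P.Blocking M (aa k) (bb (k+1)))
    (hfreshL : ∀ bs, Lopt = some bs → bb (k+1) ≠ bs) :
    False := by
  classical
  have hMm : P.IsMatching M := hdom.1.1
  -- injectivity of bb on [1, k+1]
  have hbinj : ∀ i j, 1 ≤ i → i ≤ k+1 → 1 ≤ j → j ≤ k+1 → bb i = bb j → i = j := by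
    intro i j hi1 hik hj1 hjk h
    rcases Nat.lt_or_ge i (k+1) with hik' | hik'
    · rcases Nat.lt_or_ge j (k+1) with hjk' | hjk'
      · have h1 := hstep i hi1 (by omega)
        have h2 := hstep j hj1 (by omega)
        rw [← h] at h2
        exact hainj i j (by omega) (by omega) (P.muB hMm h1 h2)
      · have hj : j = k + 1 := by omega
        subst hj
        exact absurd h.symm (hfreshB i hi1 (by omega))
    · have hi : i = k + 1 := by omega
      subst hi
      rcases Nat.lt_or_ge j (k+1) with hjk' | hjk'
      · exact absurd h (hfreshB j hj1 (by omega))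
      · omega
  -- the swapped matching
  set del : Finset (A × B) :=
    ((Finset.Icc 1 k).image fun i => (aa i, bb i)) ∪
      (Lopt.elim ∅ fun bs => {(aa 0, bs)}) ∪
      (Ropt.elim ∅ fun ap => {(ap, bb (k+1))}) with hdel_def
  set addE : Finset (A × B) :=
    (Finset.Icc 1 (k+1)).image fun i => (aa (i-1), bb i) with haddE_def
  set N : Finset (A × B) := (M \ del) ∪ addE with hN_def
  have mem_add : ∀ x y, ((x, y) ∈ addE ↔ ∃ i, 1 ≤ i ∧ i ≤ k+1 ∧ x = aa (i-1) ∧ y = bb i) := by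
    intro x y
    simp only [haddE_def, Finset.mem_image, Finset.mem_Icc, Prod.mk.injEq]
    constructor
    · rintro ⟨i, ⟨hi1, hi2⟩, hx, hy⟩
      exact ⟨i, hi1, hi2, hx.symm, hy.symm⟩
    · rintro ⟨i, hi1, hi2, hx, hy⟩
      exact ⟨i, ⟨hi1, hi2⟩, hx.symm, hy.symm⟩
  have mem_del : ∀ x y, ((x, y) ∈ del ↔
      (∃ i, 1 ≤ i ∧ i ≤ k ∧ x = aa i ∧ y = bb i) ∨
      (∃ bs, Lopt = some bs ∧ x = aa 0 ∧ y = bs) ∨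
      (∃ ap, Ropt = some ap ∧ x = ap ∧ y = bb (k+1))) := by
    intro x y
    rw [hdel_def]
    constructor
    · intro h
      rcases Finset.mem_union.1 h with h | h
      · rcases Finset.mem_union.1 h with h | h
        · obtain ⟨i, hi, he⟩ := Finset.mem_image.1 h
          rw [Finset.mem_Icc] at hi
          exact Or.inl ⟨i, hi.1, hi.2, (congrArg Prod.fst he).symm, (congrArg Prod.snd he).symm⟩
        · rcases hLo : Lopt with _ | bs
          · rw [hLo] at h; exact absurd h (Finset.notMem_empty _)
          · rw [hLo] at h
            have he := Finset.mem_singleton.1 h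
            exact Or.inr (Or.inl ⟨bs, rfl, congrArg Prod.fst he, congrArg Prod.snd he⟩)
      · rcases hRo : Ropt with _ | ap
        · rw [hRo] at h; exact absurd h (Finset.notMem_empty _)
        · rw [hRo] at h
          have he := Finset.mem_singleton.1 h
          exact Or.inr (Or.inr ⟨ap, rfl, congrArg Prod.fst he, congrArg Prod.snd he⟩)
    · rintro (⟨i, h1, h2, hx, hy⟩ | ⟨bs, hbs, hx, hy⟩ | ⟨ap, hap, hx, hy⟩)
      · refine Finset.mem_union_left _ (Finset.mem_union_left _ (Finset.mem_image.2 ⟨i, ?_, ?_⟩))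
        · exact Finset.mem_Icc.2 ⟨h1, h2⟩
        · rw [hx, hy]
      · refine Finset.mem_union_left _ (Finset.mem_union_right _ ?_)
        rw [hbs]
        exact Finset.mem_singleton.2 (by rw [hx, hy])
      · refine Finset.mem_union_right _ ?_
        rw [hap]
        exact Finset.mem_singleton.2 (by rw [hx, hy])
  have hN1 : ∀ i, 1 ≤ i → i ≤ k+1 → (aa (i-1), bb i) ∈ N := by
    intro i h1 h2
    exact Finset.mem_union_right _ ((mem_add _ _).2 ⟨i, h1, h2, rfl, rfl⟩)
  have hNsub : ∀ x y, (x, y) ∈ N →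
      ((x, y) ∈ M ∧ (x, y) ∉ del) ∨ ∃ i, 1 ≤ i ∧ i ≤ k+1 ∧ x = aa (i-1) ∧ y = bb i := by
    intro x y hxy
    rcases Finset.mem_union.1 hxy with h | h
    · exact Or.inl (Finset.mem_sdiff.1 h)
    · exact Or.inr ((mem_add _ _).1 h)
  -- partner computations in N
  have manN : ∀ i, i ≤ k → ∀ y, (aa i, y) ∈ N → y = bb (i+1) := by
    intro i hik y hy
    rcases hNsub _ _ hy with ⟨hyM, hynd⟩ | ⟨j, hj1, hjk, hxe, hye⟩
    · exfalso
      rcases Nat.eq_zero_or_pos i with rfl | hi1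
      · rcases hLo : Lopt with _ | bs
        · exact hLn hLo y hyM
        · have hybs : y = bs := P.muA hMm hyM (hLs bs hLo).1
          exact hynd ((mem_del _ _).2 (Or.inr (Or.inl ⟨bs, hLo, rfl, hybs⟩)))
      · have hyb : y = bb i := P.muA hMm hyM (hstep i hi1 hik)
        exact hynd ((mem_del _ _).2 (Or.inl ⟨i, hi1, hik, rfl, hyb⟩))
    · have : j - 1 = i := hainj (j-1) i (by omega) hik hxe.symm
      have hj : j = i + 1 := by omega
      rw [hye, hj]
  have apfresh : ∀ ap, Ropt = some ap → ∀ i, i ≤ k → ap ≠ aa i := by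
    intro ap hap i hik he
    have hR1 := (hRs ap hap).1
    rcases Nat.eq_zero_or_pos i with rfl | hi1
    · rcases hLo : Lopt with _ | bs
      · exact hLn hLo (bb (k+1)) (he ▸ hR1)
      · exact hfreshL bs hLo (P.muA hMm (he ▸ hR1) (hLs bs hLo).1)
    · exact hfreshB i hi1 hik (P.muA hMm (he ▸ hR1) (hstep i hi1 hik))
  have apN : ∀ ap, Ropt = some ap → ∀ y, (ap, y) ∈ N → False := by
    intro ap hap y hy
    rcases hNsub _ _ hy with ⟨hyM, hynd⟩ | ⟨j, hj1, hjk, hxe, hye⟩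
    · have hyb : y = bb (k+1) := P.muA hMm hyM (hRs ap hap).1
      exact hynd ((mem_del _ _).2 (Or.inr (Or.inr ⟨ap, hap, rfl, hyb⟩)))
    · exact apfresh ap hap (j-1) (by omega) hxe
  have freshAN : ∀ x, (∀ i, i ≤ k → x ≠ aa i) → (∀ ap, Ropt = some ap → x ≠ ap) →
      ∀ y, ((x, y) ∈ N ↔ (x, y) ∈ M) := by
    intro x h1 h2 y
    constructor
    · intro hy
      rcases hNsub _ _ hy with ⟨hyM, _⟩ | ⟨j, hj1, hjk, hxe, _⟩
      · exact hyM
      · exact absurd hxe (h1 (j-1) (by omega))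
    · intro hy
      refine Finset.mem_union_left _ (Finset.mem_sdiff.2 ⟨hy, fun hd => ?_⟩)
      rcases (mem_del _ _).1 hd with ⟨i, hi1, hik, hx, _⟩ | ⟨bs, _, hx, _⟩ | ⟨ap, hap, hx, _⟩
      · exact h1 i hik hx
      · exact h1 0 (by omega) hx
      · exact h2 ap hap hx
  have bsfresh : ∀ bs, Lopt = some bs → ∀ i, 1 ≤ i → i ≤ k+1 → bs ≠ bb i := by
    intro bs hbs i hi1 hik he
    have hL1 := (hLs bs hbs).1
    rcases Nat.lt_or_ge i (k+1) with hik' | hik'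
    · have := P.muB hMm (he ▸ hL1) (hstep i hi1 (by omega))
      exact absurd (hainj 0 i (by omega) (by omega) this) (by omega)
    · have : i = k+1 := by omega
      exact hfreshL bs hbs (this ▸ he).symm
  have womanN : ∀ i, 1 ≤ i → i ≤ k+1 → ∀ x, (x, bb i) ∈ N → x = aa (i-1) := by
    intro i hi1 hik x hx
    rcases hNsub _ _ hx with ⟨hxM, hxnd⟩ | ⟨j, hj1, hjk, hxe, hye⟩
    · exfalso
      rcases Nat.lt_or_ge i (k+1) with hik' | hik'
      · have hxa : x = aa i := P.muB hMm hxM (hstep i hi1 (by omega))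
        exact hxnd ((mem_del _ _).2 (Or.inl ⟨i, hi1, by omega, hxa, rfl⟩))
      · have hi : i = k+1 := by omega
        subst hi
        rcases hRo : Ropt with _ | ap
        · exact hRn hRo x hxM
        · have hxa : x = ap := P.muB hMm hxM (hRs ap hRo).1
          exact hxnd ((mem_del _ _).2 (Or.inr (Or.inr ⟨ap, hRo, hxa, rfl⟩)))
    · have : i = j := hbinj i j hi1 hik hj1 hjk hye
      rw [hxe, this]
  have bsN : ∀ bs, Lopt = some bs → ∀ x, (x, bs) ∈ N → False := by
    intro bs hbs x hx
    rcases hNsub _ _ hx with ⟨hxM, hxnd⟩ | ⟨j, hj1, hjk, hxe, hye⟩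
    · have hxa : x = aa 0 := P.muB hMm hxM (hLs bs hbs).1
      exact hxnd ((mem_del _ _).2 (Or.inr (Or.inl ⟨bs, hbs, hxa, rfl⟩)))
    · exact bsfresh bs hbs j hj1 hjk hye
  have freshBN : ∀ y, (∀ i, 1 ≤ i → i ≤ k+1 → y ≠ bb i) → (∀ bs, Lopt = some bs → y ≠ bs) →
      ∀ x, ((x, y) ∈ N ↔ (x, y) ∈ M) := by
    intro y h1 h2 x
    constructor
    · intro hy
      rcases hNsub _ _ hy with ⟨hyM, _⟩ | ⟨j, hj1, hjk, _, hye⟩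
      · exact hyM
      · exact absurd hye (h1 j hj1 hjk)
    · intro hy
      refine Finset.mem_union_left _ (Finset.mem_sdiff.2 ⟨hy, fun hd => ?_⟩)
      rcases (mem_del _ _).1 hd with ⟨i, hi1, hik, _, hye⟩ | ⟨bs, hbs, _, hye⟩ | ⟨ap, _, _, hye⟩
      · exact h1 i hi1 (by omega) hye
      · exact h2 bs hbs hye
      · exact h1 (k+1) (by omega) (by omega) hye
  -- N is a matching
  have hNmatch : P.IsMatching N := by
    refine ⟨?_, ?_, ?_⟩
    · rintro ⟨x, y⟩ hp
      rcases hNsub _ _ hp with ⟨hyM, _⟩ | ⟨j, hj1, hjk, hxe, hye⟩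
      · exact hMm.1 _ hyM
      · rw [hxe, hye]; exact (hedge j hj1 hjk).1
    · rintro ⟨x, y⟩ hp ⟨x', y'⟩ hq h
      dsimp at h
      subst h
      by_cases hx : ∃ i, i ≤ k ∧ x = aa i
      · obtain ⟨i, hik, rfl⟩ := hx
        rw [Prod.mk.injEq]
        exact ⟨rfl, (manN i hik y hp).trans (manN i hik y' hq).symm⟩
      · by_cases hap : ∃ ap, Ropt = some ap ∧ x = ap
        · obtain ⟨ap, hap', he⟩ := hap
          exact absurd hp (fun hp => apN ap hap' y (he ▸ hp))
        · have h1 : ∀ i, i ≤ k → x ≠ aa i := fun i hik he => hx ⟨i, hik, he⟩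
          have h2 : ∀ ap, Ropt = some ap → x ≠ ap := fun ap ha he => hap ⟨ap, ha, he⟩
          rw [Prod.mk.injEq]
          exact ⟨rfl, P.muA hMm ((freshAN x h1 h2 y).1 hp) ((freshAN x h1 h2 y').1 hq)⟩
    · rintro ⟨x, y⟩ hp ⟨x', y'⟩ hq h
      dsimp at h
      subst h
      by_cases hy : ∃ i, 1 ≤ i ∧ i ≤ k+1 ∧ y = bb i
      · obtain ⟨i, hi1, hik, rfl⟩ := hy
        rw [Prod.mk.injEq]
        exact ⟨(womanN i hi1 hik x hp).trans (womanN i hi1 hik x' hq).symm, rfl⟩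
      · by_cases hbs : ∃ bs, Lopt = some bs ∧ y = bs
        · obtain ⟨bs, hbs', he⟩ := hbs
          exact absurd hp (fun hp => bsN bs hbs' x (he ▸ hp))
        · have h1 : ∀ i, 1 ≤ i → i ≤ k+1 → y ≠ bb i := fun i hi1 hik he => hy ⟨i, hi1, hik, he⟩
          have h2 : ∀ bs, Lopt = some bs → y ≠ bs := fun bs hb he => hbs ⟨bs, hb, he⟩
          rw [Prod.mk.injEq]
          exact ⟨P.muB hMm ((freshBN y h1 h2 x).1 hp) ((freshBN y h1 h2 x').1 hq), rfl⟩

  have hN1' : ∀ i, i ≤ k → (aa i, bb (i+1)) ∈ N := by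
    intro i hik
    have := hN1 (i+1) (by omega) (by omega)
    rwa [Nat.add_sub_cancel] at this
  have hedge'' : ∀ i, i ≤ k → P.adj (aa i) (bb (i+1)) ∧ (aa i, bb (i+1)) ∉ M ∧
      (P.voteAplus M (aa i) (bb (i+1)) ∨ P.voteBplus M (aa i) (bb (i+1))) := by
    intro i hik
    have := hedge (i+1) (by omega) (by omega)
    rwa [Nat.add_sub_cancel] at this
  have vA0 : P.voteAplus M (aa 0) (bb 1) := by
    rcases hLo : Lopt with _ | bs
    · intro b' hb'; exact absurd hb' (hLn hLo b')
    · exact (hLs bs hLo).2.2.2.1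
  -- the pairing function
  set gA : A → A ⊕ B := fun a =>
    if h : ∃ i, 1 ≤ i ∧ i ≤ k ∧ a = aa i then Sum.inr (bb (h.choose + 1))
    else if _h2 : ∃ ap, Ropt = some ap ∧ a = ap then Sum.inr (bb (k+1))
    else Sum.inl a with hgA_def
  set gB : B → A ⊕ B := fun b =>
    if _h : ∃ bs, Lopt = some bs ∧ b = bs then Sum.inl (aa 0)
    else if h2 : ∃ i, 1 ≤ i ∧ i ≤ k ∧ b = bb i then Sum.inl (aa (h2.choose - 1))
    else Sum.inr b with hgB_def
  set g : A ⊕ B → A ⊕ B := Sum.elim gA gB with hg_def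
  have geqA : ∀ i, 1 ≤ i → i ≤ k → g (Sum.inl (aa i)) = Sum.inr (bb (i+1)) := by
    intro i h1 h2
    have hc : ∃ j, 1 ≤ j ∧ j ≤ k ∧ aa i = aa j := ⟨i, h1, h2, rfl⟩
    have hcc : hc.choose = i := by
      have hs := hc.choose_spec
      exact hainj hc.choose i (by omega) (by omega) hs.2.2.symm
    rw [hg_def, Sum.elim_inl]
    simp only [hgA_def]
    rw [dif_pos hc, hcc]
  have geqAp : ∀ ap, Ropt = some ap → g (Sum.inl ap) = Sum.inr (bb (k+1)) := by
    intro ap hap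
    have hne : ¬ ∃ i, 1 ≤ i ∧ i ≤ k ∧ ap = aa i := by
      rintro ⟨i, h1, h2, he⟩; exact apfresh ap hap i h2 he
    rw [hg_def, Sum.elim_inl]
    simp only [hgA_def]
    rw [dif_neg hne, dif_pos ⟨ap, hap, rfl⟩]
  have geqBs : ∀ bs, Lopt = some bs → g (Sum.inr bs) = Sum.inl (aa 0) := by
    intro bs hbs
    rw [hg_def, Sum.elim_inr]
    simp only [hgB_def]
    rw [dif_pos ⟨bs, hbs, rfl⟩]
  have geqB : ∀ i, 1 ≤ i → i ≤ k → g (Sum.inr (bb i)) = Sum.inl (aa (i-1)) := by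
    intro i h1 h2
    have hne : ¬ ∃ bs, Lopt = some bs ∧ bb i = bs := by
      rintro ⟨bs, hbs, he⟩; exact bsfresh bs hbs i h1 (by omega) he.symm
    have hc : ∃ j, 1 ≤ j ∧ j ≤ k ∧ bb i = bb j := ⟨i, h1, h2, rfl⟩
    have hcc : hc.choose = i := by
      have hs := hc.choose_spec
      exact hbinj hc.choose i (by omega) (by omega) h1 (by omega) hs.2.2.symm
    rw [hg_def, Sum.elim_inr]
    simp only [hgB_def]
    rw [dif_neg hne, dif_pos hc, hcc]
  -- classification of vertices preferring M to N
  have loserA : ∀ a, P.prefA M N a →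
      (∃ i, 1 ≤ i ∧ i ≤ k ∧ a = aa i ∧ P.voteBplus M (aa i) (bb (i+1)) ∧
        (∀ ap, Ropt = some ap → i ≠ k)) ∨
      (∃ ap, Ropt = some ap ∧ a = ap) := by
    intro a ha
    obtain ⟨y, hyM, hy⟩ := ha
    by_cases h0 : a = aa 0
    · exfalso
      subst h0
      rcases hLo : Lopt with _ | bs
      · exact hLn hLo y hyM
      · have h1 := hy (bb 1) (hN1 1 (le_refl 1) (by omega))
        have h2 := (hLs bs hLo).2.2.2.1 y hyM
        omega
    by_cases h1 : ∃ i, 1 ≤ i ∧ i ≤ k ∧ a = aa i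
    · left
      obtain ⟨i, hi1, hik, rfl⟩ := h1
      have hyb : y = bb i := P.muA hMm hyM (hstep i hi1 hik)
      subst hyb
      have h2 := hy (bb (i+1)) (hN1' i hik)
      refine ⟨i, hi1, hik, rfl, ?_, ?_⟩
      · rcases (hedge'' i hik).2.2 with hA | hB
        · exact absurd (hA _ hyM) (by omega)
        · exact hB
      · intro ap hap he
        subst he
        have h3 := (hRs ap hap).2.2.2.1 _ hyM
        omega
    by_cases h2 : ∃ ap, Ropt = some ap ∧ a = ap
    · exact Or.inr h2
    · exfalso
      have h3 : ∀ i, i ≤ k → a ≠ aa i := by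
        intro i hik he
        rcases Nat.eq_zero_or_pos i with rfl | hi1
        · exact h0 he
        · exact h1 ⟨i, hi1, hik, he⟩
      have h4 : ∀ ap, Ropt = some ap → a ≠ ap := fun ap ha he => h2 ⟨ap, ha, he⟩
      have h5 := (freshAN a h3 h4 y).2 hyM
      have := hy y h5
      omega
  have loserB : ∀ b, P.prefB M N b →
      (∃ bs, Lopt = some bs ∧ b = bs) ∨
      (∃ i, 1 ≤ i ∧ i ≤ k ∧ b = bb i ∧ P.voteAplus M (aa (i-1)) (bb i) ∧
        (∀ bs, Lopt = some bs → 2 ≤ i)) := by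
    intro b hb
    obtain ⟨x, hxM, hx⟩ := hb
    by_cases hbs : ∃ bs, Lopt = some bs ∧ b = bs
    · exact Or.inl hbs
    by_cases hbk : b = bb (k+1)
    · exfalso
      subst hbk
      rcases hRo : Ropt with _ | ap
      · exact hRn hRo x hxM
      · have h1 := hx (aa k) (by
          have := hN1 (k+1) (by omega) (le_refl _)
          rwa [Nat.add_sub_cancel] at this)
        have h2 := (hRs ap hRo).2.2.2.2 x hxM
        have hxap : x = ap := P.muB hMm hxM (hRs ap hRo).1
        subst hxap
        omega
    by_cases h1 : ∃ i, 1 ≤ i ∧ i ≤ k ∧ b = bb i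
    · right
      obtain ⟨i, hi1, hik, rfl⟩ := h1
      have hxa : x = aa i := P.muB hMm hxM (hstep i hi1 hik)
      subst hxa
      have h2 := hx (aa (i-1)) (hN1 i hi1 (by omega))
      refine ⟨i, hi1, hik, rfl, ?_, ?_⟩
      · rcases (hedge i hi1 (by omega)).2.2 with hA | hB
        · exact hA
        · exact absurd (hB _ hxM) (by omega)
      · intro bs2 hbs2
        by_contra hlt
        have hi : i = 1 := by omega
        subst hi
        have h3 := (hLs bs2 hbs2).2.2.2.2 _ hxM
        rw [show (1:ℕ) - 1 = 0 from rfl] at h2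
        omega
    · exfalso
      have h3 : ∀ i, 1 ≤ i → i ≤ k+1 → b ≠ bb i := by
        intro i hi1 hik he
        rcases Nat.lt_or_ge i (k+1) with h | h
        · exact h1 ⟨i, hi1, by omega, he⟩
        · exact hbk (by rw [he]; congr 1; omega)
      have h4 : ∀ bs, Lopt = some bs → b ≠ bs := fun bs hb he => hbs ⟨bs, hb, he⟩
      have h5 := (freshBN b h3 h4 x).2 hxM
      have := hx x h5
      omega
  -- winners
  have winA : ∀ i, i ≤ k → P.voteAplus M (aa i) (bb (i+1)) → P.prefA N M (aa i) :=
    fun i hik hv => ⟨bb (i+1), hN1' i hik, hv⟩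
  have winB : ∀ i, 1 ≤ i → i ≤ k+1 → P.voteBplus M (aa (i-1)) (bb i) → P.prefB N M (bb i) :=
    fun i h1 h2 hv => ⟨aa (i-1), hN1 i h1 h2, hv⟩
  have hg : ∀ x, P.prefV M N x → P.prefV N M (g x) := by
    intro x hx
    rcases x with a | b
    · rcases loserA a hx with ⟨i, hi1, hik, rfl, hB, _⟩ | ⟨ap, hap, rfl⟩
      · rw [geqA i hi1 hik, prefV_inr]
        exact winB (i+1) (by omega) (by omega) (by rwa [Nat.add_sub_cancel])
      · rw [geqAp a hap, prefV_inr]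
        refine winB (k+1) (by omega) (le_refl _) ?_
        rw [Nat.add_sub_cancel]
        exact (hRs a hap).2.2.2.2
    · rcases loserB b hx with ⟨bs, hbs, rfl⟩ | ⟨i, hi1, hik, rfl, hA, _⟩
      · rw [geqBs b hbs, prefV_inl]
        exact winA 0 (by omega) vA0
      · rw [geqB i hi1 hik, prefV_inl]
        refine winA (i-1) (by omega) ?_
        rw [show i - 1 + 1 = i by omega]
        exact hA
  have hinj : ∀ x y, P.prefV M N x → P.prefV M N y → g x = g y → x = y := by
    intro x y hx hy hgxy
    rcases x with a | b <;> rcases y with a' | b'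
    · rcases loserA a hx with ⟨i, hi1, hik, rfl, _, hiR⟩ | ⟨ap, hap, rfl⟩ <;>
        rcases loserA a' hy with ⟨j, hj1, hjk, rfl, _, hjR⟩ | ⟨ap', hap', rfl⟩
      · rw [geqA i hi1 hik, geqA j hj1 hjk] at hgxy
        have h := hbinj (i+1) (j+1) (by omega) (by omega) (by omega) (by omega)
          (Sum.inr.inj hgxy)
        rw [show i = j by omega]
      · rw [geqA i hi1 hik, geqAp a' hap'] at hgxy
        have h := hbinj (i+1) (k+1) (by omega) (by omega) (by omega) (le_refl _)
          (Sum.inr.inj hgxy)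
        exact absurd (by omega : i = k) (hiR a' hap')
      · rw [geqAp a hap, geqA j hj1 hjk] at hgxy
        have h := hbinj (k+1) (j+1) (by omega) (le_refl _) (by omega) (by omega)
          (Sum.inr.inj hgxy)
        exact absurd (by omega : j = k) (hjR a hap)
      · rw [hap] at hap'
        rw [Option.some.inj hap']
    · rcases loserA a hx with ⟨i, hi1, hik, rfl, _, _⟩ | ⟨ap, hap, rfl⟩ <;>
        rcases loserB b' hy with ⟨bs, hbs, rfl⟩ | ⟨j, hj1, hjk, rfl, _, _⟩
      · rw [geqA i hi1 hik, geqBs b' hbs] at hgxy; exact absurd hgxy (by simp)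
      · rw [geqA i hi1 hik, geqB j hj1 hjk] at hgxy; exact absurd hgxy (by simp)
      · rw [geqAp a hap, geqBs b' hbs] at hgxy; exact absurd hgxy (by simp)
      · rw [geqAp a hap, geqB j hj1 hjk] at hgxy; exact absurd hgxy (by simp)
    · rcases loserB b hx with ⟨bs, hbs, rfl⟩ | ⟨i, hi1, hik, rfl, _, _⟩ <;>
        rcases loserA a' hy with ⟨j, hj1, hjk, rfl, _, _⟩ | ⟨ap, hap, rfl⟩
      · rw [geqBs b hbs, geqA j hj1 hjk] at hgxy; exact absurd hgxy (by simp)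
      · rw [geqBs b hbs, geqAp a' hap] at hgxy; exact absurd hgxy (by simp)
      · rw [geqB i hi1 hik, geqA j hj1 hjk] at hgxy; exact absurd hgxy (by simp)
      · rw [geqB i hi1 hik, geqAp a' hap] at hgxy; exact absurd hgxy (by simp)
    · rcases loserB b hx with ⟨bs, hbs, rfl⟩ | ⟨i, hi1, hik, rfl, _, hiL⟩ <;>
        rcases loserB b' hy with ⟨bs', hbs', rfl⟩ | ⟨j, hj1, hjk, rfl, _, hjL⟩
      · rw [hbs] at hbs'
        rw [Option.some.inj hbs']
      · rw [geqBs b hbs, geqB j hj1 hjk] at hgxy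
        have h := hainj 0 (j-1) (by omega) (by omega) (Sum.inl.inj hgxy)
        have := hjL b hbs
        omega
      · rw [geqB i hi1 hik, geqBs b' hbs'] at hgxy
        have h := hainj (i-1) 0 (by omega) (by omega) (Sum.inl.inj hgxy)
        have := hiL b' hbs'
        omega
      · rw [geqB i hi1 hik, geqB j hj1 hjk] at hgxy
        have h := hainj (i-1) (j-1) (by omega) (by omega) (Sum.inl.inj hgxy)
        rw [show i = j by omega]
  -- final case analysis
  rcases hRo : Ropt with _ | ap
  · rcases hLo : Lopt with _ | bs
    · -- augmenting path: contradict dominance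
      have hdelM : del ⊆ M := by
        intro p hp
        obtain ⟨x, y⟩ := p
        rcases (mem_del x y).1 hp with ⟨i, h1, h2, hx, hy⟩ | ⟨bs, hbs, _, _⟩ | ⟨ap, hap, _, _⟩
        · rw [hx, hy]; exact hstep i h1 h2
        · rw [hLo] at hbs; exact absurd hbs (by simp)
        · rw [hRo] at hap; exact absurd hap (by simp)
      have hdelcard : del.card = k := by
        rw [hdel_def, hLo, hRo]
        simp only [Option.elim_none, Finset.union_empty]
        have hinj' : Set.InjOn (fun i => (aa i, bb i)) (Finset.Icc 1 k) := by
          intro i hi j hj he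
          rw [Finset.coe_Icc, Set.mem_Icc] at hi hj
          exact hainj i j (by omega) (by omega) (congrArg Prod.fst he)
        rw [Finset.card_image_of_injOn hinj', Nat.card_Icc]
        omega
      have haddcard : addE.card = k + 1 := by
        rw [haddE_def]
        have hinj' : Set.InjOn (fun i => (aa (i-1), bb i)) (Finset.Icc 1 (k+1)) := by
          intro i hi j hj he
          rw [Finset.coe_Icc, Set.mem_Icc] at hi hj
          exact hbinj i j hi.1 hi.2 hj.1 hj.2 (congrArg Prod.snd he)
        rw [Finset.card_image_of_injOn hinj', Nat.card_Icc]
        omega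
      have hdisj : Disjoint (M \ del) addE := by
        rw [Finset.disjoint_right]
        intro p hp hp'
        obtain ⟨x, y⟩ := p
        obtain ⟨i, h1, h2, hx, hy⟩ := (mem_add x y).1 hp
        have hm := (Finset.mem_sdiff.1 hp').1
        rw [hx, hy] at hm
        exact (hedge i h1 h2).2.1 hm
      have hNcard : N.card = M.card + 1 := by
        rw [hN_def, Finset.card_union_of_disjoint hdisj, Finset.card_sdiff_of_subset hdelM,
          hdelcard, haddcard]
        have hkM : k ≤ M.card := hdelcard ▸ Finset.card_le_card hdelM
        omega
      exact P.dominant_absurd hdom N hNmatch (by omega) g hg hinj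
    · -- left blocking seed : witness (bb 1)
      refine P.popular_absurd hdom.1 N hNmatch g hg hinj (Sum.inr (bb 1)) ?_ ?_
      · rw [prefV_inr]
        refine winB 1 (le_refl _) (by omega) ?_
        exact (hLs bs hLo).2.2.2.2
      · intro x hx
        rcases x with a | b
        · rcases loserA a hx with ⟨i, hi1, hik, rfl, _, _⟩ | ⟨ap, hap, rfl⟩
          · rw [geqA i hi1 hik]
            intro he
            have h := hbinj (i+1) 1 (by omega) (by omega) (by omega) (by omega)
              (Sum.inr.inj he)
            omega
          · rw [hRo] at hap; exact absurd hap (by simp)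
        · rcases loserB b hx with ⟨bs', hbs', rfl⟩ | ⟨i, hi1, hik, rfl, _, _⟩
          · rw [geqBs b hbs']; simp
          · rw [geqB i hi1 hik]; simp
  · -- right blocking end : witness (aa k)
    refine P.popular_absurd hdom.1 N hNmatch g hg hinj (Sum.inl (aa k)) ?_ ?_
    · rw [prefV_inl]
      refine winA k (le_refl _) ?_
      exact (hRs ap hRo).2.2.2.1
    · intro x hx
      rcases x with a | b
      · rcases loserA a hx with ⟨i, hi1, hik, rfl, _, _⟩ | ⟨ap', hap', rfl⟩
        · rw [geqA i hi1 hik]; simp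
        · rw [geqAp a hap']; simp
      · rcases loserB b hx with ⟨bs, hbs, rfl⟩ | ⟨i, hi1, hik, rfl, _, _⟩
        · rw [geqBs b hbs]
          intro he
          have h := hainj 0 k (by omega) (le_refl _) (Sum.inl.inj he)
          have := hLR b ap hbs hRo
          omega
        · rw [geqB i hi1 hik]
          intro he
          have h := hainj (i-1) k (by omega) (le_refl _) (Sum.inl.inj he)
          omega


lemma cyc_absurd {M : Finset (A × B)} (hpop : P.Popular M)
    (m : ℕ) (hm : 1 ≤ m) (cc : ℕ → A) (dd : ℕ → B)
    (hwrap : dd (m+1) = dd 0)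
    (hmatch : ∀ i, i ≤ m → (cc i, dd i) ∈ M)
    (hedge : ∀ i, i ≤ m → P.adj (cc i) (dd (i+1)) ∧ (cc i, dd (i+1)) ∉ M ∧
      (P.voteAplus M (cc i) (dd (i+1)) ∨ P.voteBplus M (cc i) (dd (i+1))))
    (hblock : P.Blocking M (cc m) (dd (m+1)))
    (hcinj : ∀ i j, i ≤ m → j ≤ m → cc i = cc j → i = j) :
    False := by
  classical
  have hMm : P.IsMatching M := hpop.1
  have hdinj : ∀ i j, i ≤ m → j ≤ m → dd i = dd j → i = j := by
    intro i j hi hj h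
    have h1 := hmatch i hi
    have h2 := hmatch j hj
    rw [← h] at h2
    exact hcinj i j hi hj (P.muB hMm h1 h2)
  set del : Finset (A × B) := (Finset.Icc 0 m).image (fun i => (cc i, dd i)) with hdel_def
  set addE : Finset (A × B) := (Finset.Icc 0 m).image (fun i => (cc i, dd (i+1))) with haddE_def
  set N : Finset (A × B) := (M \ del) ∪ addE with hN_def
  have mem_add : ∀ x y, ((x, y) ∈ addE ↔ ∃ i, i ≤ m ∧ x = cc i ∧ y = dd (i+1)) := by
    intro x y
    simp only [haddE_def, Finset.mem_image, Finset.mem_Icc, Prod.mk.injEq]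
    constructor
    · rintro ⟨i, hi, hx, hy⟩
      exact ⟨i, hi.2, hx.symm, hy.symm⟩
    · rintro ⟨i, hi, hx, hy⟩
      exact ⟨i, ⟨Nat.zero_le _, hi⟩, hx.symm, hy.symm⟩
  have mem_del : ∀ x y, ((x, y) ∈ del ↔ ∃ i, i ≤ m ∧ x = cc i ∧ y = dd i) := by
    intro x y
    simp only [hdel_def, Finset.mem_image, Finset.mem_Icc, Prod.mk.injEq]
    constructor
    · rintro ⟨i, hi, hx, hy⟩
      exact ⟨i, hi.2, hx.symm, hy.symm⟩
    · rintro ⟨i, hi, hx, hy⟩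
      exact ⟨i, ⟨Nat.zero_le _, hi⟩, hx.symm, hy.symm⟩
  have hN1 : ∀ i, i ≤ m → (cc i, dd (i+1)) ∈ N := by
    intro i hi
    exact Finset.mem_union_right _ ((mem_add _ _).2 ⟨i, hi, rfl, rfl⟩)
  have hNsub : ∀ x y, (x, y) ∈ N →
      ((x, y) ∈ M ∧ (x, y) ∉ del) ∨ ∃ i, i ≤ m ∧ x = cc i ∧ y = dd (i+1) := by
    intro x y hxy
    rcases Finset.mem_union.1 hxy with h | h
    · exact Or.inl (Finset.mem_sdiff.1 h)
    · exact Or.inr ((mem_add _ _).1 h)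
  have manN : ∀ i, i ≤ m → ∀ y, (cc i, y) ∈ N → y = dd (i+1) := by
    intro i hi y hy
    rcases hNsub _ _ hy with ⟨hyM, hynd⟩ | ⟨j, hj, hx, hye⟩
    · exfalso
      have : y = dd i := P.muA hMm hyM (hmatch i hi)
      exact hynd ((mem_del _ _).2 ⟨i, hi, rfl, this⟩)
    · have : j = i := hcinj j i hj hi hx.symm
      rw [hye, this]
  have freshAN : ∀ x, (∀ i, i ≤ m → x ≠ cc i) → ∀ y, ((x, y) ∈ N ↔ (x, y) ∈ M) := by
    intro x h1 y
    constructor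
    · intro hy
      rcases hNsub _ _ hy with ⟨hyM, _⟩ | ⟨j, hj, hx, _⟩
      · exact hyM
      · exact absurd hx (h1 j hj)
    · intro hy
      refine Finset.mem_union_left _ (Finset.mem_sdiff.2 ⟨hy, fun hd => ?_⟩)
      obtain ⟨i, hi, hx, _⟩ := (mem_del _ _).1 hd
      exact h1 i hi hx
  have womanN0 : ∀ x, (x, dd 0) ∈ N → x = cc m := by
    intro x hx
    rcases hNsub _ _ hx with ⟨hxM, hxnd⟩ | ⟨j, hj, hxe, hye⟩
    · exfalso
      have : x = cc 0 := P.muB hMm hxM (hmatch 0 (Nat.zero_le _))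
      exact hxnd ((mem_del _ _).2 ⟨0, Nat.zero_le _, this, rfl⟩)
    · rcases Nat.lt_or_ge j m with hjm | hjm
      · exfalso
        have := hdinj 0 (j+1) (Nat.zero_le _) (by omega) hye
        omega
      · have : j = m := by omega
        rw [hxe, this]
  have womanNj : ∀ j, 1 ≤ j → j ≤ m → ∀ x, (x, dd j) ∈ N → x = cc (j-1) := by
    intro j hj1 hjm x hx
    rcases hNsub _ _ hx with ⟨hxM, hxnd⟩ | ⟨i, hi, hxe, hye⟩
    · exfalso
      have : x = cc j := P.muB hMm hxM (hmatch j hjm)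
      exact hxnd ((mem_del _ _).2 ⟨j, hjm, this, rfl⟩)
    · rcases Nat.lt_or_ge i m with him | him
      · have := hdinj j (i+1) hjm (by omega) hye
        rw [hxe]
        congr 1
        omega
      · exfalso
        have hi' : i = m := by omega
        rw [hi', hwrap] at hye
        have := hdinj j 0 hjm (Nat.zero_le _) hye
        omega
  have freshBN : ∀ y, (∀ i, i ≤ m → y ≠ dd i) → ∀ x, ((x, y) ∈ N ↔ (x, y) ∈ M) := by
    intro y h1 x
    constructor
    · intro hy
      rcases hNsub _ _ hy with ⟨hyM, _⟩ | ⟨j, hj, _, hye⟩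
      · exact hyM
      · rcases Nat.lt_or_ge j m with hjm | hjm
        · exact absurd hye (h1 (j+1) (by omega))
        · have : j = m := by omega
          rw [this, hwrap] at hye
          exact absurd hye (h1 0 (Nat.zero_le _))
    · intro hy
      refine Finset.mem_union_left _ (Finset.mem_sdiff.2 ⟨hy, fun hd => ?_⟩)
      obtain ⟨i, hi, _, hye⟩ := (mem_del _ _).1 hd
      exact h1 i hi hye
  have hNmatch : P.IsMatching N := by
    refine ⟨?_, ?_, ?_⟩
    · rintro ⟨x, y⟩ hp
      rcases hNsub _ _ hp with ⟨hyM, _⟩ | ⟨j, hj, hxe, hye⟩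
      · exact hMm.1 _ hyM
      · rw [hxe, hye]; exact (hedge j hj).1
    · rintro ⟨x, y⟩ hp ⟨x', y'⟩ hq h
      dsimp at h
      subst h
      by_cases hx : ∃ i, i ≤ m ∧ x = cc i
      · obtain ⟨i, hi, rfl⟩ := hx
        rw [Prod.mk.injEq]
        exact ⟨rfl, (manN i hi y hp).trans (manN i hi y' hq).symm⟩
      · have h1 : ∀ i, i ≤ m → x ≠ cc i := fun i hi he => hx ⟨i, hi, he⟩
        rw [Prod.mk.injEq]
        exact ⟨rfl, P.muA hMm ((freshAN x h1 y).1 hp) ((freshAN x h1 y').1 hq)⟩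
    · rintro ⟨x, y⟩ hp ⟨x', y'⟩ hq h
      dsimp at h
      subst h
      by_cases hy : ∃ j, j ≤ m ∧ y = dd j
      · obtain ⟨j, hj, rfl⟩ := hy
        rcases Nat.eq_zero_or_pos j with rfl | hj1
        · rw [Prod.mk.injEq]
          exact ⟨(womanN0 x hp).trans (womanN0 x' hq).symm, rfl⟩
        · rw [Prod.mk.injEq]
          exact ⟨(womanNj j hj1 hj x hp).trans (womanNj j hj1 hj x' hq).symm, rfl⟩
      · have h1 : ∀ i, i ≤ m → y ≠ dd i := fun i hi he => hy ⟨i, hi, he⟩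
        rw [Prod.mk.injEq]
        exact ⟨P.muB hMm ((freshBN y h1 x).1 hp) ((freshBN y h1 x').1 hq), rfl⟩
  -- pairing
  set gA : A → A ⊕ B := fun a =>
    if h : ∃ i, i ≤ m ∧ a = cc i then Sum.inr (dd (h.choose + 1)) else Sum.inl a with hgA_def
  set gB : B → A ⊕ B := fun b =>
    if h : ∃ j, 1 ≤ j ∧ j ≤ m ∧ b = dd j then Sum.inl (cc (h.choose - 1)) else Sum.inr b
    with hgB_def
  set g : A ⊕ B → A ⊕ B := Sum.elim gA gB with hg_def
  have geqA : ∀ i, i ≤ m → g (Sum.inl (cc i)) = Sum.inr (dd (i+1)) := by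
    intro i hi
    have hc : ∃ j, j ≤ m ∧ cc i = cc j := ⟨i, hi, rfl⟩
    have hcc : hc.choose = i := by
      have hs := hc.choose_spec
      exact hcinj hc.choose i hs.1 hi hs.2.symm
    rw [hg_def, Sum.elim_inl]
    simp only [hgA_def]
    rw [dif_pos hc, hcc]
  have geqB : ∀ j, 1 ≤ j → j ≤ m → g (Sum.inr (dd j)) = Sum.inl (cc (j-1)) := by
    intro j hj1 hjm
    have hc : ∃ i, 1 ≤ i ∧ i ≤ m ∧ dd j = dd i := ⟨j, hj1, hjm, rfl⟩
    have hcc : hc.choose = j := by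
      have hs := hc.choose_spec
      exact hdinj hc.choose j hs.2.1 hjm hs.2.2.symm
    rw [hg_def, Sum.elim_inr]
    simp only [hgB_def]
    rw [dif_pos hc, hcc]
  -- losers
  have loserA : ∀ a, P.prefA M N a →
      ∃ i, i ≤ m ∧ a = cc i ∧ P.voteBplus M (cc i) (dd (i+1)) ∧ i ≠ m := by
    intro a ha
    obtain ⟨y, hyM, hy⟩ := ha
    by_cases h1 : ∃ i, i ≤ m ∧ a = cc i
    · obtain ⟨i, hi, rfl⟩ := h1
      have hyb : y = dd i := P.muA hMm hyM (hmatch i hi)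
      subst hyb
      have h2 := hy (dd (i+1)) (hN1 i hi)
      refine ⟨i, hi, rfl, ?_, ?_⟩
      · rcases (hedge i hi).2.2 with hA | hB
        · exact absurd (hA _ hyM) (by omega)
        · exact hB
      · intro he
        subst he
        have h3 := hblock.2.2.1 _ hyM
        omega
    · exfalso
      have h3 : ∀ i, i ≤ m → a ≠ cc i := fun i hi he => h1 ⟨i, hi, he⟩
      have h5 := (freshAN a h3 y).2 hyM
      have := hy y h5
      omega
  have loserB : ∀ b, P.prefB M N b →
      ∃ j, 1 ≤ j ∧ j ≤ m ∧ b = dd j ∧ P.voteAplus M (cc (j-1)) (dd j) := by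
    intro b hb
    obtain ⟨x, hxM, hx⟩ := hb
    by_cases h1 : ∃ j, j ≤ m ∧ b = dd j
    · obtain ⟨j, hj, rfl⟩ := h1
      rcases Nat.eq_zero_or_pos j with rfl | hj1
      · exfalso
        have hxa : x = cc 0 := P.muB hMm hxM (hmatch 0 (Nat.zero_le _))
        subst hxa
        have h2 := hx (cc m) (by rw [← hwrap]; exact hN1 m (le_refl _))
        have h3 := hblock.2.2.2 _ (hwrap ▸ hxM)
        rw [hwrap] at h3
        omega
      · have hxa : x = cc j := P.muB hMm hxM (hmatch j hj)
        subst hxa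
        have h2 := hx (cc (j-1)) (by
          have := hN1 (j-1) (by omega)
          rwa [show j - 1 + 1 = j by omega] at this)
        refine ⟨j, hj1, hj, rfl, ?_⟩
        rcases (hedge (j-1) (by omega)).2.2 with hA | hB
        · rwa [show j - 1 + 1 = j by omega] at hA
        · exfalso
          rw [show j - 1 + 1 = j by omega] at hB
          exact absurd (hB _ hxM) (by omega)
    · exfalso
      have h3 : ∀ i, i ≤ m → b ≠ dd i := fun i hi he => h1 ⟨i, hi, he⟩
      have h5 := (freshBN b h3 x).2 hxM
      have := hx x h5
      omega
  have winA : ∀ i, i ≤ m → P.voteAplus M (cc i) (dd (i+1)) → P.prefA N M (cc i) :=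
    fun i hi hv => ⟨dd (i+1), hN1 i hi, hv⟩
  have winB : ∀ i, i ≤ m → P.voteBplus M (cc i) (dd (i+1)) → P.prefB N M (dd (i+1)) :=
    fun i hi hv => ⟨cc i, hN1 i hi, hv⟩
  have hg : ∀ x, P.prefV M N x → P.prefV N M (g x) := by
    intro x hx
    rcases x with a | b
    · obtain ⟨i, hi, rfl, hB, _⟩ := loserA a hx
      rw [geqA i hi, prefV_inr]
      exact winB i hi hB
    · obtain ⟨j, hj1, hjm, rfl, hA⟩ := loserB b hx
      rw [geqB j hj1 hjm, prefV_inl]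
      refine winA (j-1) (by omega) ?_
      rwa [show j - 1 + 1 = j by omega]
  have hinj : ∀ x y, P.prefV M N x → P.prefV M N y → g x = g y → x = y := by
    intro x y hx hy hgxy
    rcases x with a | b <;> rcases y with a' | b'
    · obtain ⟨i, hi, rfl, _, him⟩ := loserA a hx
      obtain ⟨j, hj, rfl, _, hjm⟩ := loserA a' hy
      rw [geqA i hi, geqA j hj] at hgxy
      have h := hdinj (i+1) (j+1) (by omega) (by omega) (Sum.inr.inj hgxy)
      rw [show i = j by omega]
    · obtain ⟨i, hi, rfl, _, _⟩ := loserA a hx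
      obtain ⟨j, hj1, hjm, rfl, _⟩ := loserB b' hy
      rw [geqA i hi, geqB j hj1 hjm] at hgxy
      exact absurd hgxy (by simp)
    · obtain ⟨i, hi1, him, rfl, _⟩ := loserB b hx
      obtain ⟨j, hj, rfl, _, _⟩ := loserA a' hy
      rw [geqB i hi1 him, geqA j hj] at hgxy
      exact absurd hgxy (by simp)
    · obtain ⟨i, hi1, him, rfl, _⟩ := loserB b hx
      obtain ⟨j, hj1, hjm, rfl, _⟩ := loserB b' hy
      rw [geqB i hi1 him, geqB j hj1 hjm] at hgxy
      have h := hcinj (i-1) (j-1) (by omega) (by omega) (Sum.inl.inj hgxy)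
      rw [show i = j by omega]
  refine P.popular_absurd hpop N hNmatch g hg hinj (Sum.inl (cc m)) ?_ ?_
  · rw [prefV_inl]
    exact winA m (le_refl _) hblock.2.2.1
  · intro x hx
    rcases x with a | b
    · obtain ⟨i, hi, rfl, _, _⟩ := loserA a hx
      rw [geqA i hi]
      simp
    · obtain ⟨j, hj1, hjm, rfl, _⟩ := loserB b hx
      rw [geqB j hj1 hjm]
      intro he
      have h := hcinj (j-1) m (by omega) (le_refl _) (Sum.inl.inj he)
      omega

/-- the inductively defined set `A₁`. -/
inductive InA1_s12 (P : PrefSys A B) (M : Finset (A × B)) : A → Prop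
  | unmatched (a : A) : (∀ b, (a, b) ∉ M) → InA1_s12 P M a
  | blockSeed (a a' : A) (b : B) : P.Blocking M a' b → (a, b) ∈ M → InA1_s12 P M a
  | step (a a' : A) (b : B) : InA1_s12 P M a → P.adj a b → (a, b) ∉ M →
      (P.voteAplus M a b ∨ P.voteBplus M a b) → (a', b) ∈ M → InA1_s12 P M a'

/-- an explicit alternating chain witnessing membership in `A₁`. -/
def IsChain (M : Finset (A × B)) (k : ℕ) (aa : ℕ → A) (bb : ℕ → B) : Prop :=
  (∀ i, 1 ≤ i → i ≤ k → (aa i, bb i) ∈ M) ∧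
  (∀ i, 1 ≤ i → i ≤ k → P.adj (aa (i-1)) (bb i) ∧ (aa (i-1), bb i) ∉ M ∧
    (P.voteAplus M (aa (i-1)) (bb i) ∨ P.voteBplus M (aa (i-1)) (bb i))) ∧
  ((∀ b, (aa 0, b) ∉ M) ∨ (1 ≤ k ∧ P.Blocking M (aa 0) (bb 1)))

lemma chain_of {M : Finset (A × B)} (b0 : B) {a : A} (h : InA1_s12 P M a) :
    ∃ k aa bb, P.IsChain M k aa bb ∧ aa k = a := by
  induction h with
  | unmatched a ha =>
    exact ⟨0, fun _ => a, fun _ => b0,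
      ⟨fun i h1 h2 => absurd h2 (by omega), fun i h1 h2 => absurd h2 (by omega), Or.inl ha⟩, rfl⟩
  | blockSeed a a' b hbl hab =>
    refine ⟨1, fun i => if i = 0 then a' else a, fun _ => b, ⟨?_, ?_, ?_⟩, rfl⟩
    · intro i h1 h2
      have : i = 1 := by omega
      subst this
      simpa using hab
    · intro i h1 h2
      have : i = 1 := by omega
      subst this
      simpa using ⟨hbl.1, hbl.2.1, Or.inl hbl.2.2.1⟩
    · exact Or.inr ⟨le_refl _, by simpa using hbl⟩
  | step a a' b hIn hadj hnm hv hab IH =>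
    obtain ⟨k, aa, bb, ⟨hstep, hedge, hseed⟩, hak⟩ := IH
    refine ⟨k+1, fun i => if i ≤ k then aa i else a', fun i => if i ≤ k then bb i else b,
      ⟨?_, ?_, ?_⟩, by simp⟩
    · intro i h1 h2
      rcases Nat.lt_or_ge i (k+1) with h | h
      · simpa [show i ≤ k by omega] using hstep i h1 (by omega)
      · have : i = k + 1 := by omega
        subst this
        simpa using hab
    · intro i h1 h2
      rcases Nat.lt_or_ge i (k+1) with h | h
      · simpa [show i ≤ k by omega, show i - 1 ≤ k by omega] using hedge i h1 (by omega)
      · have : i = k + 1 := by omega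
        subst this
        have e1 : k + 1 - 1 = k := by omega
        rw [e1]
        simp only [le_refl, if_pos, Nat.lt_irrefl, if_neg (by omega : ¬ k + 1 ≤ k)]
        rw [hak]
        exact ⟨hadj, hnm, hv⟩
    · rcases hseed with hun | ⟨hk1, hbl⟩
      · exact Or.inl (by simpa using hun)
      · exact Or.inr ⟨by omega, by simpa [show (1:ℕ) ≤ k from hk1] using hbl⟩

lemma chain_good {M : Finset (A × B)} (hdom : P.Dominant M) :
    ∀ k aa bb, P.IsChain M k aa bb →
      (∀ b, P.adj (aa k) b → (∀ x, (x, b) ∉ M) → False) ∧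
      (∀ b, ¬ P.Blocking M (aa k) b) := by
  intro k
  induction k using Nat.strong_induction_on with
  | _ k IH =>
  intro aa bb hch
  obtain ⟨hstep, hedge, hseed⟩ := hch
  by_cases hdup : ∃ i j, 1 ≤ i ∧ i < j ∧ j ≤ k ∧ aa i = aa j
  · -- splice out the repetition and use the induction hypothesis
    obtain ⟨i, j, hi1, hij, hjk, he⟩ := hdup
    set d := j - i with hd
    have hkd : k - d < k := by omega
    have hch' : P.IsChain M (k - d) (fun l => if l ≤ i then aa l else aa (l + d))
        (fun l => if l ≤ i then bb l else bb (l + d)) := by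
      refine ⟨?_, ?_, ?_⟩
      · intro l h1 h2
        by_cases h : l ≤ i
        · simpa [h] using hstep l h1 (by omega)
        · simpa [h] using hstep (l + d) (by omega) (by omega)
      · intro l h1 h2
        by_cases h : l ≤ i
        · have h' : l - 1 ≤ i := by omega
          simpa [h, h'] using hedge l h1 (by omega)
        · by_cases h' : l - 1 ≤ i
          · have hl : l = i + 1 := by omega
            have hthis := hedge (l + d) (by omega) (by omega)
            have hidx : l + d - 1 = j := by omega
            rw [hidx, ← he] at hthis
            simp only [if_neg h, if_pos h']
            have hidx2 : l - 1 = i := by omega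
            rw [hidx2]
            exact hthis
          · have hthis := hedge (l + d) (by omega) (by omega)
            have hidx : l + d - 1 = l - 1 + d := by omega
            rw [hidx] at hthis
            simp only [if_neg h, if_neg h']
            exact hthis
      · rcases hseed with hun | ⟨hk1, hbl⟩
        · exact Or.inl (by simpa using hun)
        · exact Or.inr ⟨by omega, by simpa [show (1:ℕ) ≤ i from hi1] using hbl⟩
    have H := IH (k - d) hkd _ _ hch'
    have hend : (if k - d ≤ i then aa (k - d) else aa (k - d + d)) = aa k := by
      by_cases h : k - d ≤ i
      · have h1 : k - d = i := by omega
        have h2 : k = j := by omega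
        rw [if_pos h, h1, he, ← h2]
      · rw [if_neg h]
        congr 1
        omega
    simp only [hend] at H
    exact H
  · have hainj1 : ∀ i j, 1 ≤ i → i ≤ k → 1 ≤ j → j ≤ k → aa i = aa j → i = j := by
      intro i j hi1 hik hj1 hjk he
      by_contra hne
      rcases Nat.lt_or_ge i j with h | h
      · exact hdup ⟨i, j, hi1, h, hjk, he⟩
      · exact hdup ⟨j, i, hj1, by omega, hik, he.symm⟩
    by_cases h0 : ∃ j, 1 ≤ j ∧ j ≤ k ∧ aa 0 = aa j
    · -- the start of the chain reappears: alternating cycle with a blocking edge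
      exfalso
      obtain ⟨j, hj1, hjk, he⟩ := h0
      rcases hseed with hun | ⟨hk1, hbl⟩
      · exact hun (bb j) (by rw [he]; exact hstep j hj1 hjk)
      · by_cases hj2 : j = 1
        · subst hj2
          rw [he] at hbl
          exact hbl.2.1 (hstep 1 hj1 hjk)
        · have hnn : ¬ (j - 1 + 1 ≤ j - 1) := by omega
          refine P.cyc_absurd hdom.1 (j-1) (by omega) (fun i => aa (i+1))
            (fun i => if i ≤ j - 1 then bb (i+1) else bb 1) ?_ ?_ ?_ ?_ ?_
          · simp [hnn]
          · intro i hi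
            simpa [hi] using hstep (i+1) (by omega) (by omega)
          · intro i hi
            rcases Nat.lt_or_ge i (j-1) with h | h
            · have hthis := hedge (i+2) (by omega) (by omega)
              rw [show i+2-1 = i+1 by omega] at hthis
              simpa [show i+1 ≤ j-1 by omega, show i+1+1 = i+2 by omega] using hthis
            · have hieq : i = j - 1 := by omega
              subst hieq
              simp only [if_neg hnn]
              rw [show j - 1 + 1 = j by omega, ← he]
              exact ⟨hbl.1, hbl.2.1, Or.inl hbl.2.2.1⟩
          · simp only [if_neg hnn]
            rw [show j - 1 + 1 = j by omega, ← he]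
            exact hbl
          · intro i i' hi hi' hee
            have := hainj1 (i+1) (i'+1) (by omega) (by omega) (by omega) (by omega) hee
            omega
    · have hainj : ∀ i j, i ≤ k → j ≤ k → aa i = aa j → i = j := by
        intro i j hik hjk he
        rcases Nat.eq_zero_or_pos i with rfl | hi1
        · rcases Nat.eq_zero_or_pos j with rfl | hj1
          · rfl
          · exact absurd ⟨j, hj1, hjk, he⟩ h0
        · rcases Nat.eq_zero_or_pos j with rfl | hj1
          · exact absurd ⟨i, hi1, hik, he.symm⟩ h0
          · exact hainj1 i j hi1 hik hj1 hjk he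
      -- the generic path argument
      have keyP : ∀ (b : B) (Ro : Option A),
          P.adj (aa k) b → (aa k, b) ∉ M →
          (P.voteAplus M (aa k) b ∨ P.voteBplus M (aa k) b) →
          (Ro = none → ∀ x, (x, b) ∉ M) →
          (∀ x, Ro = some x → (x, b) ∈ M ∧ P.Blocking M (aa k) b) →
          (∀ j, 1 ≤ j → j ≤ k → b ≠ bb j) →
          (∀ bsv, (aa 0, bsv) ∈ M → b ≠ bsv) → False := by
        intro b Ro hadj hnm hv hRn0 hRs0 hfr hfrL
        set bb' : ℕ → B := fun i => if i ≤ k then bb i else b with hbb'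
        have hbk1 : bb' (k+1) = b := if_neg (by omega)
        have hb1 : 1 ≤ k → bb' 1 = bb 1 := fun h => if_pos h
        have hstep' : ∀ i, 1 ≤ i → i ≤ k → (aa i, bb' i) ∈ M := by
          intro i h1 h2
          rw [hbb']
          simpa [h2] using hstep i h1 h2
        have hedge' : ∀ i, 1 ≤ i → i ≤ k+1 → P.adj (aa (i-1)) (bb' i) ∧ (aa (i-1), bb' i) ∉ M ∧
            (P.voteAplus M (aa (i-1)) (bb' i) ∨ P.voteBplus M (aa (i-1)) (bb' i)) := by
          intro i h1 h2
          rcases Nat.lt_or_ge i (k+1) with h | h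
          · rw [hbb']
            simpa [show i ≤ k by omega] using hedge i h1 (by omega)
          · have : i = k+1 := by omega
            subst this
            rw [hbk1, Nat.add_sub_cancel]
            exact ⟨hadj, hnm, hv⟩
        have hfresh' : ∀ i, 1 ≤ i → i ≤ k → bb' (k+1) ≠ bb' i := by
          intro i h1 h2
          rw [hbk1, hbb']
          simpa [h2] using hfr i h1 h2
        have hRn' : Ro = none → ∀ x, (x, bb' (k+1)) ∉ M := by
          intro h x
          rw [hbk1]
          exact hRn0 h x
        have hRs' : ∀ ap, Ro = some ap → (ap, bb' (k+1)) ∈ M ∧ P.Blocking M (aa k) (bb' (k+1)) := by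
          intro ap h
          rw [hbk1]
          exact hRs0 ap h
        rcases hseed with hun | ⟨hk1, hbls⟩
        · exact P.path_absurd hdom k aa bb' hstep' hedge' hainj hfresh' none Ro
            (fun _ => hun) (fun bs h => nomatch h) (fun bs ap h _ => nomatch h) hRn' hRs'
            (fun bs h => nomatch h)
        · by_cases hm0 : ∃ bsv, (aa 0, bsv) ∈ M
          · obtain ⟨bsv, hbsv⟩ := hm0
            refine P.path_absurd hdom k aa bb' hstep' hedge' hainj hfresh' (some bsv) Ro
              (fun h => nomatch h) (fun bs h => ?_) (fun _ _ _ _ => hk1) hRn' hRs'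
              (fun bs h => ?_)
            · cases Option.some.inj h
              refine ⟨hbsv, ?_⟩
              rw [hb1 hk1]
              exact hbls
            · cases Option.some.inj h
              rw [hbk1]
              exact hfrL bsv hbsv
          · have hun : ∀ b, (aa 0, b) ∉ M := fun b hb => hm0 ⟨b, hb⟩
            exact P.path_absurd hdom k aa bb' hstep' hedge' hainj hfresh' none Ro
              (fun _ => hun) (fun bs h => nomatch h) (fun bs ap h _ => nomatch h) hRn' hRs'
              (fun bs h => nomatch h)
      have key1 : ∀ b, P.adj (aa k) b → (∀ x, (x, b) ∉ M) → False := by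
        intro b hadj hunm
        exact keyP b none hadj (hunm (aa k)) (Or.inr fun x hx => absurd hx (hunm x))
          (fun _ => hunm) (fun x h => nomatch h)
          (fun j h1 h2 he => hunm (aa j) (by rw [he]; exact hstep j h1 h2))
          (fun bsv hbsv he => hunm (aa 0) (by rw [he]; exact hbsv))
      refine ⟨key1, ?_⟩
      intro b hbl
      by_cases hbm : ∃ x, (x, b) ∈ M
      · obtain ⟨x, hxb⟩ := hbm
        by_cases hbbj : ∃ j, 1 ≤ j ∧ j ≤ k ∧ b = bb j
        · obtain ⟨j, hj1, hjk, rfl⟩ := hbbj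
          by_cases hjk2 : j = k
          · subst hjk2
            exact hbl.2.1 (hstep j hj1 hjk)
          · have hnn : ¬ (k - j + 1 ≤ k - j) := by omega
            refine P.cyc_absurd hdom.1 (k-j) (by omega) (fun i => aa (j+i))
              (fun i => if i ≤ k - j then bb (j+i) else bb j) ?_ ?_ ?_ ?_ ?_
            · simp [hnn]
            · intro i hi
              simpa [hi] using hstep (j+i) (by omega) (by omega)
            · intro i hi
              rcases Nat.lt_or_ge i (k-j) with h | h
              · have hthis := hedge (j+i+1) (by omega) (by omega)
                rw [show j+i+1-1 = j+i by omega] at hthis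
                simpa [show i+1 ≤ k-j by omega, show j+(i+1) = j+i+1 by omega] using hthis
              · have hieq : i = k - j := by omega
                subst hieq
                simp only [if_neg hnn]
                rw [show j + (k - j) = k by omega]
                exact ⟨hbl.1, hbl.2.1, Or.inl hbl.2.2.1⟩
            · simp only [if_neg hnn]
              rw [show j + (k - j) = k by omega]
              exact hbl
            · intro i i' hi hi' hee
              have := hainj (j+i) (j+i') (by omega) (by omega) hee
              omega
        · by_cases hbsv : ∃ bsv, (aa 0, bsv) ∈ M ∧ b = bsv
          · obtain ⟨bsv, hbsvM, rfl⟩ := hbsv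
            rcases hseed with hun | ⟨hk1, hbls⟩
            · exact hun b hbsvM
            · -- cycle through the whole chain
              have hnn : ¬ (1 ≤ k + 1 ∧ k + 1 ≤ k) := by omega
              refine P.cyc_absurd hdom.1 k hk1 aa
                (fun i => if 1 ≤ i ∧ i ≤ k then bb i else b) ?_ ?_ ?_ ?_ hainj
              · simp [hnn]
              · intro i hi
                rcases Nat.eq_zero_or_pos i with rfl | hi1
                · simpa using hbsvM
                · simpa [show 1 ≤ i from hi1, hi] using hstep i hi1 hi
              · intro i hi
                rcases Nat.lt_or_ge i k with h | h
                · have hthis := hedge (i+1) (by omega) (by omega)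
                  rw [Nat.add_sub_cancel] at hthis
                  simpa [show 1 ≤ i+1 by omega, show i+1 ≤ k by omega] using hthis
                · have hieq : i = k := by omega
                  subst hieq
                  simp only [if_neg hnn]
                  exact ⟨hbl.1, hbl.2.1, Or.inl hbl.2.2.1⟩
              · simp only [if_neg hnn]
                exact hbl
          · refine keyP b (some x) hbl.1 hbl.2.1 (Or.inl hbl.2.2.1)
              (fun h => nomatch h) (fun x' h => ?_) ?_ ?_
            · cases Option.some.inj h
              exact ⟨hxb, hbl⟩
            · intro j h1 h2 he
              exact hbbj ⟨j, h1, h2, he⟩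
            · intro bsv hb he
              exact hbsv ⟨bsv, hb, he⟩
      · exact key1 b hbl.1 (fun x hx => hbm ⟨x, hx⟩)

lemma InA1_good {M : Finset (A × B)} (hdom : P.Dominant M) {a : A} (h : InA1_s12 P M a) :
    (∀ b, P.adj a b → ∃ x, (x, b) ∈ M) ∧ (∀ b, ¬ P.Blocking M a b) := by
  constructor
  · intro b hadj
    by_contra hun
    push_neg at hun
    obtain ⟨k, aa, bb, hch, hak⟩ := P.chain_of b h
    exact (P.chain_good hdom k aa bb hch).1 b (by rw [hak]; exact hadj) hun
  · intro b hbl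
    obtain ⟨k, aa, bb, hch, hak⟩ := P.chain_of b h
    exact (P.chain_good hdom k aa bb hch).2 b (by rw [hak]; exact hbl)

lemma no_block_unmatched {M : Finset (A × B)} (hdom : P.Dominant M) {a : A} {b : B}
    (hbl : P.Blocking M a b) (hbu : ∀ x, (x, b) ∉ M) : False := by
  classical
  by_cases hm : ∃ bsv, (a, bsv) ∈ M
  · obtain ⟨bsv, hbsv⟩ := hm
    refine P.path_absurd hdom 0 (fun _ => a) (fun _ => b) ?_ ?_ ?_ ?_ (some bsv) none
      (fun h => nomatch h) (fun bs h => ?_) (fun bs ap _ h => nomatch h)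
      (fun _ x => hbu x) (fun ap h => nomatch h) (fun bs h => ?_)
    · intro i h1 h2; omega
    · intro i h1 h2
      have : i = 1 := by omega
      subst this
      exact ⟨hbl.1, hbl.2.1, Or.inl hbl.2.2.1⟩
    · intro i j hi hj _; omega
    · intro i h1 h2; omega
    · cases Option.some.inj h
      exact ⟨hbsv, hbl⟩
    · cases Option.some.inj h
      intro he
      have he' : b = bsv := he
      exact hbu a (by rw [he']; exact hbsv)
  · refine P.path_absurd hdom 0 (fun _ => a) (fun _ => b) ?_ ?_ ?_ ?_ none none
      (fun _ b' hb' => hm ⟨b', hb'⟩) (fun bs h => nomatch h) (fun bs ap h _ => nomatch h)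
      (fun _ x => hbu x) (fun ap h => nomatch h) (fun bs h => nomatch h)
    · intro i h1 h2; omega
    · intro i h1 h2
      have : i = 1 := by omega
      subst this
      exact ⟨hbl.1, hbl.2.1, Or.inl hbl.2.2.1⟩
    · intro i j hi hj _; omega
    · intro i h1 h2; omega

end PrefSys
open PrefSys in
/-- the map `T` from stable matchings of `G'` to dominant
matchings of `G` is surjective. -/
theorem aux_T_surjective {A B : Type} [Fintype A] [Fintype B]
    (P : PrefSys A B) (M : Finset (A × B)) (hM : P.Dominant M) :
    ∃ M', (P.aux).Stable M' ∧ Tmap M' = M := by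
  classical
  have hMm : P.IsMatching M := hM.1.1
  set ι : A → A ⊕ A := fun a => if InA1_s12 P M a then Sum.inr a else Sum.inl a with hι
  set δ : A → A ⊕ A := fun a => if InA1_s12 P M a then Sum.inl a else Sum.inr a with hδ
  set M' : Finset ((A ⊕ A) × (B ⊕ A)) :=
    M.image (fun p => (ι p.1, Sum.inl p.2)) ∪
      (Finset.univ.image fun a => (δ a, Sum.inr a)) with hM'
  -- basic membership facts
  have hreal : ∀ a b, (a, b) ∈ M → (ι a, Sum.inl b) ∈ M' := by
    intro a b hab
    exact Finset.mem_union_left _ (Finset.mem_image.2 ⟨(a, b), hab, rfl⟩)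
  have hdummy : ∀ a, (δ a, Sum.inr a) ∈ M' :=
    fun a => Finset.mem_union_right _ (Finset.mem_image.2 ⟨a, Finset.mem_univ a, rfl⟩)
  have hmem : ∀ z ∈ M', (∃ p ∈ M, z = (ι p.1, Sum.inl p.2)) ∨ ∃ a, z = (δ a, Sum.inr a) := by
    intro z hz
    rcases Finset.mem_union.1 hz with h | h
    · obtain ⟨p, hp, he⟩ := Finset.mem_image.1 h
      exact Or.inl ⟨p, hp, he.symm⟩
    · obtain ⟨a, _, he⟩ := Finset.mem_image.1 h
      exact Or.inr ⟨a, he.symm⟩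
  -- injectivity facts about the encodings
  have hι_inj : ∀ a a', ι a = ι a' → a = a' := by
    intro a a' h
    rw [hι] at h
    by_cases h1 : InA1_s12 P M a <;> by_cases h2 : InA1_s12 P M a' <;> simp [h1, h2] at h <;> exact h
  have hδ_inj : ∀ a a', δ a = δ a' → a = a' := by
    intro a a' h
    rw [hδ] at h
    by_cases h1 : InA1_s12 P M a <;> by_cases h2 : InA1_s12 P M a' <;> simp [h1, h2] at h <;> exact h
  have hιδ : ∀ a a', ι a ≠ δ a' := by
    intro a a' h
    rw [hι, hδ] at h
    by_cases h1 : InA1_s12 P M a <;> by_cases h2 : InA1_s12 P M a' <;> simp [h1, h2] at h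
    · exact h2 (h ▸ h1)
    · exact h1 (h ▸ h2)
  -- closure facts
  have hR1 : ∀ a, ¬ InA1_s12 P M a → ∃ b, (a, b) ∈ M := by
    intro a h
    by_contra h2
    push_neg at h2
    exact h (InA1_s12.unmatched a h2)
  have hO1 : ∀ a, InA1_s12 P M a → ∀ b, P.adj a b → ∃ x, (x, b) ∈ M :=
    fun a h => (P.InA1_good hM h).1
  have hO2 : ∀ a, InA1_s12 P M a → ∀ b, ¬ P.Blocking M a b :=
    fun a h => (P.InA1_good hM h).2
  have mkVA : ∀ a b_a b, (a, b_a) ∈ M → P.rankA a b < P.rankA a b_a → P.voteAplus M a b := by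
    intro a b_a b hba h b' hb'
    rw [P.muA hMm hb' hba] at *
    exact h
  have mkVB : ∀ a b x', (x', b) ∈ M → P.rankB b a < P.rankB b x' → P.voteBplus M a b := by
    intro a b x' hxb h a' ha'
    rw [P.muB hMm ha' hxb] at *
    exact h
  refine ⟨M', ⟨⟨?_, ?_, ?_⟩, ?_⟩, ?_⟩
  · -- adjacency
    rintro ⟨x, y⟩ hz
    rcases hmem _ hz with ⟨p, hp, he⟩ | ⟨a, he⟩
    · rw [he]
      show (P.aux).adj (ι p.1) (Sum.inl p.2)
      rw [hι]
      by_cases h : InA1_s12 P M p.1 <;> simp only [h, if_pos, if_neg, if_true, if_false] <;>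
        exact hMm.1 p hp
    · rw [he]
      show (P.aux).adj (δ a) (Sum.inr a)
      rw [hδ]
      by_cases h : InA1_s12 P M a <;> simp only [h, if_pos, if_neg, if_true, if_false] <;> rfl
  · -- first coordinates
    rintro p hp q hq hfst
    rcases hmem _ hp with ⟨p', hp', hep⟩ | ⟨a, hep⟩ <;>
      rcases hmem _ hq with ⟨q', hq', heq⟩ | ⟨a', heq⟩
    · rw [hep, heq] at hfst ⊢
      have : p'.1 = q'.1 := hι_inj _ _ hfst
      rw [hMm.2.1 p' hp' q' hq' this]
    · rw [hep, heq] at hfst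
      exact absurd hfst (hιδ _ _)
    · rw [hep, heq] at hfst
      exact absurd hfst.symm (hιδ _ _)
    · rw [hep, heq] at hfst ⊢
      rw [hδ_inj _ _ hfst]
  · -- second coordinates
    rintro p hp q hq hsnd
    rcases hmem _ hp with ⟨p', hp', hep⟩ | ⟨a, hep⟩ <;>
      rcases hmem _ hq with ⟨q', hq', heq⟩ | ⟨a', heq⟩
    · rw [hep, heq] at hsnd ⊢
      have : p'.2 = q'.2 := Sum.inl.inj hsnd
      rw [hMm.2.2 p' hp' q' hq' this]
    · rw [hep, heq] at hsnd
      exact absurd hsnd (by simp)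
    · rw [hep, heq] at hsnd
      exact absurd hsnd (by simp)
    · rw [hep, heq] at hsnd ⊢
      rw [Sum.inr.inj hsnd]
  · -- stability
    rintro x y hbl
    obtain ⟨hadj, hnm, hvA, hvB⟩ := hbl
    rcases y with b | c
    · rcases x with a | a
      · -- x = a₀, y = b
        have hPadj : P.adj a b := hadj
        by_cases hIn : InA1_s12 P M a
        · obtain ⟨x', hx'⟩ := hO1 a hIn b hPadj
          by_cases hIn' : InA1_s12 P M x'
          · have hmem' : (Sum.inr x', Sum.inl b) ∈ M' := by
              have := hreal x' b hx'
              rw [hι] at this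
              simpa [hIn'] using this
            have h1 : P.rankB b a + (Finset.univ.sup (P.rankB b)) + 1 < P.rankB b x' :=
              hvB _ hmem'
            have h2 : P.rankB b x' ≤ Finset.univ.sup (P.rankB b) :=
              Finset.le_sup (Finset.mem_univ x')
            omega
          · have hmem' : (Sum.inl x', Sum.inl b) ∈ M' := by
              have := hreal x' b hx'
              rw [hι] at this
              simpa [hIn'] using this
            have h1 : P.rankB b a + (Finset.univ.sup (P.rankB b)) + 1 <
                P.rankB b x' + (Finset.univ.sup (P.rankB b)) + 1 := hvB _ hmem'
            have hab : (a, b) ∉ M := by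
              intro h
              exact hIn' (by rw [P.muB hMm hx' h]; exact hIn)
            exact hIn' (InA1_s12.step a x' b hIn hPadj hab
              (Or.inr (mkVB a b x' hx' (by omega))) hx')
        · obtain ⟨b_a, hba⟩ := hR1 a hIn
          have hmem_a : (Sum.inl a, Sum.inl b_a) ∈ M' := by
            have := hreal a b_a hba
            rw [hι] at this
            simpa [hIn] using this
          by_cases hbba : b = b_a
          · exact hnm (by rw [hbba]; exact hmem_a)
          · have h1 : P.rankA a b < P.rankA a b_a := hvA _ hmem_a
            have hab : (a, b) ∉ M := fun h => hbba (P.muA hMm h hba)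
            have hvote : P.voteAplus M a b := mkVA a b_a b hba h1
            by_cases hbM : ∃ x', (x', b) ∈ M
            · obtain ⟨x', hx'⟩ := hbM
              by_cases hIn' : InA1_s12 P M x'
              · have hmem' : (Sum.inr x', Sum.inl b) ∈ M' := by
                  have := hreal x' b hx'
                  rw [hι] at this
                  simpa [hIn'] using this
                have h2 : P.rankB b a + (Finset.univ.sup (P.rankB b)) + 1 < P.rankB b x' :=
                  hvB _ hmem'
                have h3 : P.rankB b x' ≤ Finset.univ.sup (P.rankB b) :=
                  Finset.le_sup (Finset.mem_univ x')
                omega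
              · have hmem' : (Sum.inl x', Sum.inl b) ∈ M' := by
                  have := hreal x' b hx'
                  rw [hι] at this
                  simpa [hIn'] using this
                have h2 : P.rankB b a + (Finset.univ.sup (P.rankB b)) + 1 <
                    P.rankB b x' + (Finset.univ.sup (P.rankB b)) + 1 := hvB _ hmem'
                have hblock : P.Blocking M a b :=
                  ⟨hPadj, hab, hvote, mkVB a b x' hx' (by omega)⟩
                exact hIn' (InA1_s12.blockSeed x' a b hblock hx')
            · push_neg at hbM
              exact P.no_block_unmatched hM
                ⟨hPadj, hab, hvote, fun x hx => absurd hx (hbM x)⟩ hbM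
      · -- x = a₁, y = b
        have hPadj : P.adj a b := hadj
        by_cases hIn : InA1_s12 P M a
        · by_cases hma : ∃ b_a, (a, b_a) ∈ M
          · obtain ⟨b_a, hba⟩ := hma
            have hmem_a : (Sum.inr a, Sum.inl b_a) ∈ M' := by
              have := hreal a b_a hba
              rw [hι] at this
              simpa [hIn] using this
            by_cases hbba : b = b_a
            · exact hnm (by rw [hbba]; exact hmem_a)
            · have h1 : P.rankA a b + 1 < P.rankA a b_a + 1 := hvA _ hmem_a
              have hvote : P.voteAplus M a b := mkVA a b_a b hba (by omega)
              have hab : (a, b) ∉ M := fun h => hbba (P.muA hMm h hba)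
              obtain ⟨x', hx'⟩ := hO1 a hIn b hPadj
              by_cases hIn' : InA1_s12 P M x'
              · have hmem' : (Sum.inr x', Sum.inl b) ∈ M' := by
                  have := hreal x' b hx'
                  rw [hι] at this
                  simpa [hIn'] using this
                have h2 : P.rankB b a < P.rankB b x' := hvB _ hmem'
                exact hO2 a hIn b ⟨hPadj, hab, hvote, mkVB a b x' hx' h2⟩
              · exact hIn' (InA1_s12.step a x' b hIn hPadj hab (Or.inl hvote) hx')
          · push_neg at hma
            have hab : (a, b) ∉ M := hma b
            have hvote : P.voteAplus M a b := fun b' hb' => absurd hb' (hma b')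
            obtain ⟨x', hx'⟩ := hO1 a hIn b hPadj
            by_cases hIn' : InA1_s12 P M x'
            · have hmem' : (Sum.inr x', Sum.inl b) ∈ M' := by
                have := hreal x' b hx'
                rw [hι] at this
                simpa [hIn'] using this
              have h2 : P.rankB b a < P.rankB b x' := hvB _ hmem'
              exact hO2 a hIn b ⟨hPadj, hab, hvote, mkVB a b x' hx' h2⟩
            · exact hIn' (InA1_s12.step a x' b hIn hPadj hab (Or.inl hvote) hx')
        · have hmem_d : (Sum.inr a, Sum.inr a) ∈ M' := by
            have := hdummy a
            rw [hδ] at this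
            simpa [hIn] using this
          have h1 : P.rankA a b + 1 < 0 := hvA _ hmem_d
          omega
    · rcases x with a | a
      · -- x = a₀, y = d(c)
        have hca : c = a := hadj
        subst hca
        by_cases hIn : InA1_s12 P M c
        · refine hnm ?_
          have := hdummy c
          rw [hδ] at this
          simpa [hIn] using this
        · obtain ⟨b_c, hbc⟩ := hR1 c hIn
          have hmem_c : (Sum.inl c, Sum.inl b_c) ∈ M' := by
            have := hreal c b_c hbc
            rw [hι] at this
            simpa [hIn] using this
          have h1 : (Finset.univ.sup (P.rankA c)) + 1 < P.rankA c b_c := hvA _ hmem_c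
          have h2 : P.rankA c b_c ≤ Finset.univ.sup (P.rankA c) :=
            Finset.le_sup (Finset.mem_univ _)
          omega
      · -- x = a₁, y = d(c)
        have hca : c = a := hadj
        subst hca
        by_cases hIn : InA1_s12 P M c
        · have hmem_d : (Sum.inl c, Sum.inr c) ∈ M' := by
            have := hdummy c
            rw [hδ] at this
            simpa [hIn] using this
          have h1 : (1 : ℕ) < 0 := hvB _ hmem_d
          omega
        · refine hnm ?_
          have := hdummy c
          rw [hδ] at this
          simpa [hIn] using this
  · -- Tmap M' = M
    ext ⟨a, b⟩
    simp only [Tmap, Finset.mem_filterMap, Finset.mem_image, id_eq]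
    constructor
    · rintro ⟨o, ⟨p, hp, rfl⟩, ho⟩
      rcases hmem _ hp with ⟨q, hq, rfl⟩ | ⟨c, rfl⟩
      · have : proj (ι q.1, Sum.inl q.2) = some (q.1, q.2) := by
          rw [hι]
          by_cases h : InA1_s12 P M q.1 <;> simp only [h, if_true, if_false] <;> rfl
        rw [this] at ho
        obtain ⟨h1, h2⟩ := Prod.mk.injEq .. ▸ Option.some.inj ho
        rw [← h1, ← h2]
        simpa using hq
      · have : proj ((δ c, Sum.inr c) : (A ⊕ A) × (B ⊕ A)) = none := by
          rw [hδ]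
          by_cases h : InA1_s12 P M c <;> simp only [h, if_true, if_false] <;> rfl
        rw [this] at ho
        exact absurd ho (by simp)
    · intro hab
      refine ⟨proj (ι a, Sum.inl b), ⟨(ι a, Sum.inl b), hreal a b hab, rfl⟩, ?_⟩
      rw [hι]
      by_cases h : InA1_s12 P M a <;> simp only [h, if_true, if_false] <;> rfl
end

section
/- Let M be a dominant matching in G and let the sets A_0, A_1 be constructed by the reachability procedure: initialize A_1 with unmatched men and A_0 = ∅; for each (+,+) edge (y,z) ∈ G put y and M(z) (with partners) into A_0 and A_1 respectively; close A_0 under matched men adjacent in G_M to B_0 = M(A_0) ∪ {unmatched women}, and close A_1 under partners of women adjacent in G_M to A_1. Then A_0 ∩ A_1 = ∅. -/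
open Classical

namespace PrefSys

variable {A B : Type}

/-- Membership in the set `A₁` built by the reachability procedure:
`A₁` starts with the unmatched men; for every `(+,+)` edge `(y,z)` the man
`M(z)` is put into `A₁`; and `A₁` is closed under adding the `M`-partner of
any woman adjacent in `G_M` to a man already in `A₁`. -/
inductive InA1 (P : PrefSys A B) (M : Finset (A × B)) : A → Prop
  | unmatched (a : A) : (∀ b, (a, b) ∉ M) → InA1 P M a
  | blockEdge (y : A) (z : B) (a : A) :
      P.Blocking M y z → (a, z) ∈ M → InA1 P M a
  | step (a : A) (b : B) (a' : A) :
      InA1 P M a' → P.inGM M a' b → (a, b) ∈ M → InA1 P M a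

/-- Membership in the set `A₀` built by the reachability procedure:
for every `(+,+)` edge `(y,z)` the man `y` is put into `A₀`; and `A₀` is
closed under adding any matched man adjacent in `G_M` to a woman of
`B₀ = M(A₀) ∪ {unmatched women}`. -/
inductive InA0 (P : PrefSys A B) (M : Finset (A × B)) : A → Prop
  | blockEdge (a : A) (z : B) : P.Blocking M a z → InA0 P M a
  | stepUnmatched (a : A) (b b' : B) :
      (a, b') ∈ M → (∀ a', (a', b) ∉ M) → P.inGM M a b → InA0 P M a
  | step (a : A) (b b' : B) (a' : A) :
      (a, b') ∈ M → InA0 P M a' → (a', b) ∈ M → P.inGM M a b → InA0 P M a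

end PrefSys

namespace PrefSys

variable {A B : Type}

/-! ### Basic lemmas about matchings and preferences -/

section Basic

variable {P : PrefSys A B} {M N : Finset (A × B)}

lemma matchA_unique (hM : P.IsMatching M) {a : A} {b b' : B}
    (h : (a, b) ∈ M) (h' : (a, b') ∈ M) : b = b' := by
  have := hM.2.1 (a, b) h (a, b') h' rfl
  exact congrArg Prod.snd this

lemma matchB_unique (hM : P.IsMatching M) {a a' : A} {b : B}
    (h : (a, b) ∈ M) (h' : (a', b) ∈ M) : a = a' := by
  have := hM.2.2 (a, b) h (a', b) h' rfl
  exact congrArg Prod.fst this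

lemma prefA_intro {a : A} {b : B} (h : (a, b) ∈ N) (hv : P.voteAplus M a b) :
    P.prefA N M a := ⟨b, h, hv⟩

lemma prefB_intro {a : A} {b : B} (h : (a, b) ∈ N) (hv : P.voteBplus M a b) :
    P.prefB N M b := ⟨a, h, hv⟩

lemma prefA_voteA_absurd {a : A} {b : B} (hp : P.prefA M N a)
    (hb : (a, b) ∈ N) (hv : P.voteAplus M a b) : False := by
  obtain ⟨c, hc, h⟩ := hp
  exact lt_asymm (h b hb) (hv c hc)

lemma prefB_voteB_absurd {a : A} {b : B} (hp : P.prefB M N b)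
    (ha : (a, b) ∈ N) (hv : P.voteBplus M a b) : False := by
  obtain ⟨c, hc, h⟩ := hp
  exact lt_asymm (h a ha) (hv c hc)

lemma prefA_asymm {a : A} (h1 : P.prefA M N a) (h2 : P.prefA N M a) : False := by
  obtain ⟨b, hb, hb2⟩ := h1
  obtain ⟨c, hc, hc2⟩ := h2
  exact lt_asymm (hb2 c hc) (hc2 b hb)

lemma prefB_asymm {b : B} (h1 : P.prefB M N b) (h2 : P.prefB N M b) : False := by
  obtain ⟨a, ha, ha2⟩ := h1
  obtain ⟨c, hc, hc2⟩ := h2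
  exact lt_asymm (ha2 c hc) (hc2 a ha)

lemma not_prefA_of_mem_both (hM : P.IsMatching M) {a : A} {b : B}
    (hm : (a, b) ∈ M) (hn : (a, b) ∈ N) : ¬ P.prefA M N a := by
  rintro ⟨c, hc, h⟩
  have := h b hn
  rw [matchA_unique hM hc hm] at this
  exact lt_irrefl _ this

lemma not_prefB_of_mem_both (hM : P.IsMatching M) {a : A} {b : B}
    (hm : (a, b) ∈ M) (hn : (a, b) ∈ N) : ¬ P.prefB M N b := by
  rintro ⟨c, hc, h⟩
  have := h a hn
  rw [matchB_unique hM hc hm] at this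
  exact lt_irrefl _ this

lemma prefA_matched {a : A} (h : P.prefA M N a) : ∃ b, (a, b) ∈ M := by
  obtain ⟨b, hb, -⟩ := h; exact ⟨b, hb⟩

lemma prefB_matched {b : B} (h : P.prefB M N b) : ∃ a, (a, b) ∈ M := by
  obtain ⟨a, ha, -⟩ := h; exact ⟨a, ha⟩

lemma vote_of_inGM {a : A} {b : B} (h : P.inGM M a b) (hnm : (a, b) ∉ M) :
    P.voteAplus M a b ∨ P.voteBplus M a b := by
  rcases h.2 with h | h | h
  · exact absurd h hnm
  · exact Or.inl h
  · exact Or.inr h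

lemma isMatching_subset (h : N ⊆ M) (hM : P.IsMatching M) : P.IsMatching N :=
  ⟨fun p hp => hM.1 p (h hp), fun p hp q hq => hM.2.1 p (h hp) q (h hq),
   fun p hp q hq => hM.2.2 p (h hp) q (h hq)⟩

lemma isMatching_erase (hM : P.IsMatching M) (p : A × B) :
    P.IsMatching (M.erase p) := isMatching_subset (Finset.erase_subset _ _) hM

lemma isMatching_insert (hM : P.IsMatching M) {a : A} {b : B} (hadj : P.adj a b)
    (ha : ∀ c, (a, c) ∉ M) (hb : ∀ u, (u, b) ∉ M) :
    P.IsMatching (insert (a, b) M) := by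
  refine ⟨?_, ?_, ?_⟩
  · rintro p hp
    rcases Finset.mem_insert.1 hp with rfl | hp
    · exact hadj
    · exact hM.1 p hp
  · rintro p hp q hq h
    rcases Finset.mem_insert.1 hp with rfl | hp <;> rcases Finset.mem_insert.1 hq with rfl | hq
    · rfl
    · exact absurd hq (by cases q; cases h; exact fun hq => ha _ hq)
    · exact absurd hp (by cases p; cases h; exact fun hp => ha _ hp)
    · exact hM.2.1 p hp q hq h
  · rintro p hp q hq h
    rcases Finset.mem_insert.1 hp with rfl | hp <;> rcases Finset.mem_insert.1 hq with rfl | hq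
    · rfl
    · exact absurd hq (by cases q; cases h; exact fun hq => hb _ hq)
    · exact absurd hp (by cases p; cases h; exact fun hp => hb _ hp)
    · exact hM.2.2 p hp q hq h

end Basic

end PrefSys

namespace PrefSys

variable {A B : Type} [Fintype A] [Fintype B]

section Count

variable {P : PrefSys A B} {M N : Finset (A × B)}

private def sumEquiv (pA : A → Prop) (pB : B → Prop) :
    {v : A ⊕ B // Sum.elim pA pB v} ≃ ({a // pA a} ⊕ {b // pB b}) where
  toFun := fun p => match p with
    | ⟨Sum.inl a, h⟩ => Sum.inl ⟨a, h⟩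
    | ⟨Sum.inr b, h⟩ => Sum.inr ⟨b, h⟩
  invFun := fun q => match q with
    | Sum.inl ⟨a, h⟩ => ⟨Sum.inl a, h⟩
    | Sum.inr ⟨b, h⟩ => ⟨Sum.inr b, h⟩
  left_inv := by rintro ⟨a | b, h⟩ <;> rfl
  right_inv := by rintro (⟨a, h⟩ | ⟨b, h⟩) <;> rfl

lemma phi_eq_card_s13 (M' N' : Finset (A × B)) :
    P.phi M' N' = Nat.card {v : A ⊕ B // Sum.elim (P.prefA M' N') (P.prefB M' N') v} := by
  rw [Nat.card_congr (sumEquiv (P.prefA M' N') (P.prefB M' N')), Nat.card_sum]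
  rfl

/-- The canonical injection from vertices preferring `M` to vertices
preferring `N`, under the structural hypotheses on `N`. -/
lemma count_inj (hM : P.IsMatching M) (hN : P.IsMatching N)
    (H2 : ∀ a b, (a, b) ∈ N → (a, b) ∉ M → P.voteAplus M a b ∨ P.voteBplus M a b)
    (H3 : ∀ w, (∃ u, (u, w) ∈ M) → (∀ u, (u, w) ∉ N) →
      ∃ u w', (u, w) ∈ M ∧ (u, w') ∈ N ∧ (u, w') ∉ M ∧
        P.voteAplus M u w' ∧ P.voteBplus M u w')
    (H4 : ∀ v, (∃ b, (v, b) ∈ M) → (∀ b, (v, b) ∉ N) →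
      ∃ b a', (v, b) ∈ M ∧ (a', b) ∈ N ∧ (a', b) ∉ M ∧
        P.voteAplus M a' b ∧ P.voteBplus M a' b) :
    ∃ f : {v : A ⊕ B // Sum.elim (P.prefA M N) (P.prefB M N) v} →
        {v : A ⊕ B // Sum.elim (P.prefA N M) (P.prefB N M) v},
      Function.Injective f ∧
      ∀ p, (∃ a b, p.1 = Sum.inl a ∧ (f p).1 = Sum.inr b ∧
              ((a, b) ∈ N ∨ ((∀ c, (a, c) ∉ N) ∧ (a, b) ∈ M ∧
                ∃ a'', (a'', b) ∈ N ∧ P.voteAplus M a'' b))) ∨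
           (∃ a b, p.1 = Sum.inr b ∧ (f p).1 = Sum.inl a ∧
              ((a, b) ∈ N ∨ ((∀ u, (u, b) ∉ N) ∧ (a, b) ∈ M ∧
                ∃ w'', (a, w'') ∈ N ∧ P.voteBplus M a w''))) := by
  have hch : ∀ p : {v : A ⊕ B // Sum.elim (P.prefA M N) (P.prefB M N) v},
      ∃ q : {v : A ⊕ B // Sum.elim (P.prefA N M) (P.prefB N M) v},
      (∃ a b, p.1 = Sum.inl a ∧ q.1 = Sum.inr b ∧
              ((a, b) ∈ N ∨ ((∀ c, (a, c) ∉ N) ∧ (a, b) ∈ M ∧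
                ∃ a'', (a'', b) ∈ N ∧ P.voteAplus M a'' b))) ∨
      (∃ a b, p.1 = Sum.inr b ∧ q.1 = Sum.inl a ∧
              ((a, b) ∈ N ∨ ((∀ u, (u, b) ∉ N) ∧ (a, b) ∈ M ∧
                ∃ w'', (a, w'') ∈ N ∧ P.voteBplus M a w''))) := by
    rintro ⟨v | v, hv⟩
    · -- a man `v` preferring `M`
      by_cases hn : ∃ c, (v, c) ∈ N
      · obtain ⟨c, hc⟩ := hn
        have hcm : (v, c) ∉ M := fun h => not_prefA_of_mem_both hM h hc hv
        have hvote : P.voteBplus M v c := by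
          rcases H2 v c hc hcm with h | h
          · exact absurd h (fun h => prefA_voteA_absurd hv hc h)
          · exact h
        exact ⟨⟨Sum.inr c, prefB_intro hc hvote⟩, Or.inl ⟨v, c, rfl, rfl, Or.inl hc⟩⟩
      · push_neg at hn
        obtain ⟨b, a', hm, hn', _, v1, v2⟩ := H4 v (prefA_matched hv) hn
        exact ⟨⟨Sum.inr b, prefB_intro hn' v2⟩,
          Or.inl ⟨v, b, rfl, rfl, Or.inr ⟨hn, hm, a', hn', v1⟩⟩⟩
    · -- a woman `v` preferring `M`
      by_cases hn : ∃ c, (c, v) ∈ N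
      · obtain ⟨c, hc⟩ := hn
        have hcm : (c, v) ∉ M := fun h => not_prefB_of_mem_both hM h hc hv
        have hvote : P.voteAplus M c v := by
          rcases H2 c v hc hcm with h | h
          · exact h
          · exact absurd h (fun h => prefB_voteB_absurd hv hc h)
        exact ⟨⟨Sum.inl c, prefA_intro hc hvote⟩, Or.inr ⟨c, v, rfl, rfl, Or.inl hc⟩⟩
      · push_neg at hn
        obtain ⟨u, w', hm, hn', _, v1, v2⟩ := H3 v (prefB_matched hv) hn
        exact ⟨⟨Sum.inl u, prefA_intro hn' v1⟩,
          Or.inr ⟨u, v, rfl, rfl, Or.inr ⟨hn, hm, w', hn', v2⟩⟩⟩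
  choose f hf using hch
  refine ⟨f, ?_, hf⟩
  rintro ⟨v1, hv1⟩ ⟨v2, hv2⟩ heq
  have h1 := hf ⟨v1, hv1⟩
  have h2 := hf ⟨v2, hv2⟩
  rw [heq] at h1
  -- key fact: identical image
  rcases h1 with ⟨a1, b1, hp1, hq1, hc1⟩ | ⟨a1, b1, hp1, hq1, hc1⟩ <;>
    rcases h2 with ⟨a2, b2, hp2, hq2, hc2⟩ | ⟨a2, b2, hp2, hq2, hc2⟩
  · -- both men, image `inr b1 = inr b2`
    simp only at hp1 hp2
    have hb : b1 = b2 := by rw [hq1] at hq2; exact (Sum.inr.inj hq2)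
    subst hb hp1 hp2
    have : a1 = a2 := by
      rcases hc1 with h1' | ⟨hu1, hm1, a1', ha1', hva1⟩ <;>
        rcases hc2 with h2' | ⟨hu2, hm2, a2', ha2', hva2⟩
      · exact matchB_unique hN h1' h2'
      · have : a2' = a1 := matchB_unique hN ha2' h1'
        subst this
        exact absurd (prefA_voteA_absurd hv1 h1' hva2) (by simp)
      · have : a1' = a2 := matchB_unique hN ha1' h2'
        subst this
        exact absurd (prefA_voteA_absurd hv2 h2' hva1) (by simp)
      · exact matchB_unique hM hm1 hm2
    simp [this]
  · rw [hq1] at hq2; exact absurd hq2 (by simp)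
  · rw [hq1] at hq2; exact absurd hq2 (by simp)
  · simp only at hp1 hp2
    have hb : a1 = a2 := by rw [hq1] at hq2; exact (Sum.inl.inj hq2)
    subst hb hp1 hp2
    have : b1 = b2 := by
      rcases hc1 with h1' | ⟨hu1, hm1, w1', hw1', hvb1⟩ <;>
        rcases hc2 with h2' | ⟨hu2, hm2, w2', hw2', hvb2⟩
      · exact matchA_unique hN h1' h2'
      · have : w2' = b1 := matchA_unique hN hw2' h1'
        subst this
        exact absurd (prefB_voteB_absurd hv1 h1' hvb2) (by simp)
      · have : w1' = b2 := matchA_unique hN hw1' h2'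
        subst this
        exact absurd (prefB_voteB_absurd hv2 h2' hvb1) (by simp)
      · exact matchA_unique hM hm1 hm2
    simp [this]


/-- Designated `A`-vertex condition: `g` prefers `N`, no `N`-partner of `g` is
mapped from, and every `M`-partner of `g` is matched in `N`. -/
def DesA (P : PrefSys A B) (M N : Finset (A × B)) (g : A) : Prop :=
  P.prefA N M g ∧ (∀ b, (g, b) ∈ N → ¬ P.prefB M N b) ∧
    (∀ b, (g, b) ∈ M → ∃ a', (a', b) ∈ N)

def DesB (P : PrefSys A B) (M N : Finset (A × B)) (g : B) : Prop :=
  P.prefB N M g ∧ (∀ a, (a, g) ∈ N → ¬ P.prefA M N a) ∧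
    (∀ a, (a, g) ∈ M → ∃ b', (a, b') ∈ N)

lemma phi_le_of_struct (hM : P.IsMatching M) (hN : P.IsMatching N)
    (H2 : ∀ a b, (a, b) ∈ N → (a, b) ∉ M → P.voteAplus M a b ∨ P.voteBplus M a b)
    (H3 : ∀ w, (∃ u, (u, w) ∈ M) → (∀ u, (u, w) ∉ N) →
      ∃ u w', (u, w) ∈ M ∧ (u, w') ∈ N ∧ (u, w') ∉ M ∧
        P.voteAplus M u w' ∧ P.voteBplus M u w')
    (H4 : ∀ v, (∃ b, (v, b) ∈ M) → (∀ b, (v, b) ∉ N) →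
      ∃ b a', (v, b) ∈ M ∧ (a', b) ∈ N ∧ (a', b) ∉ M ∧
        P.voteAplus M a' b ∧ P.voteBplus M a' b) :
    P.phi M N ≤ P.phi N M := by
  obtain ⟨f, hinj, -⟩ := count_inj hM hN H2 H3 H4
  rw [phi_eq_card_s13, phi_eq_card_s13, Nat.card_eq_fintype_card, Nat.card_eq_fintype_card]
  exact Fintype.card_le_of_injective f hinj

lemma phi_lt_of_struct (hM : P.IsMatching M) (hN : P.IsMatching N)
    (H2 : ∀ a b, (a, b) ∈ N → (a, b) ∉ M → P.voteAplus M a b ∨ P.voteBplus M a b)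
    (H3 : ∀ w, (∃ u, (u, w) ∈ M) → (∀ u, (u, w) ∉ N) →
      ∃ u w', (u, w) ∈ M ∧ (u, w') ∈ N ∧ (u, w') ∉ M ∧
        P.voteAplus M u w' ∧ P.voteBplus M u w')
    (H4 : ∀ v, (∃ b, (v, b) ∈ M) → (∀ b, (v, b) ∉ N) →
      ∃ b a', (v, b) ∈ M ∧ (a', b) ∈ N ∧ (a', b) ∉ M ∧
        P.voteAplus M a' b ∧ P.voteBplus M a' b)
    (hdes : (∃ g, DesA P M N g) ∨ (∃ g, DesB P M N g)) :
    P.phi M N < P.phi N M := by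
  obtain ⟨f, hinj, hspec⟩ := count_inj hM hN H2 H3 H4
  rw [phi_eq_card_s13, phi_eq_card_s13, Nat.card_eq_fintype_card, Nat.card_eq_fintype_card]
  rcases hdes with ⟨g, hg1, hg2, hg3⟩ | ⟨g, hg1, hg2, hg3⟩
  · refine Fintype.card_lt_of_injective_of_notMem f hinj
      (b := ⟨Sum.inl g, hg1⟩) ?_
    rintro ⟨p, hfp⟩
    have hfp1 : (f p).1 = Sum.inl g := by rw [hfp]
    rcases hspec p with ⟨a, b, hp, hq, hc⟩ | ⟨a, b, hp, hq, hc⟩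
    · rw [hfp1] at hq; simp at hq
    · rw [hfp1] at hq
      have ha : a = g := Sum.inl.inj hq.symm
      subst ha
      rcases hc with hc | ⟨hu, hm⟩
      · have hv := p.2
        rw [hp] at hv
        exact hg2 b hc hv
      · obtain ⟨b', hb'⟩ := hg3 b hm.1
        exact hu b' hb'
  · refine Fintype.card_lt_of_injective_of_notMem f hinj
      (b := ⟨Sum.inr g, hg1⟩) ?_
    rintro ⟨p, hfp⟩
    have hfp1 : (f p).1 = Sum.inr g := by rw [hfp]
    rcases hspec p with ⟨a, b, hp, hq, hc⟩ | ⟨a, b, hp, hq, hc⟩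
    · rw [hfp1] at hq
      have hb : b = g := Sum.inr.inj hq.symm
      subst hb
      rcases hc with hc | ⟨hu, hm⟩
      · have hv := p.2
        rw [hp] at hv
        exact hg2 a hc hv
      · obtain ⟨b', hb'⟩ := hg3 a hm.1
        exact hu b' hb'
    · rw [hfp1] at hq; simp at hq

end Count

end PrefSys

namespace PrefSys

variable {A B : Type}

/-! ### Graded reachability -/

inductive InA1N (P : PrefSys A B) (M : Finset (A × B)) : ℕ → A → Prop
  | unmatched (a : A) : (∀ b, (a, b) ∉ M) → InA1N P M 1 a
  | blockEdge (y : A) (z : B) (a : A) :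
      P.Blocking M y z → (a, z) ∈ M → InA1N P M 1 a
  | step (a : A) (b : B) (a' : A) (n : ℕ) :
      InA1N P M n a' → P.inGM M a' b → (a, b) ∈ M → InA1N P M (n + 1) a

inductive InA0N (P : PrefSys A B) (M : Finset (A × B)) : ℕ → A → Prop
  | blockEdge (a : A) (z : B) : P.Blocking M a z → InA0N P M 1 a
  | stepUnmatched (a : A) (b b' : B) :
      (a, b') ∈ M → (∀ a', (a', b) ∉ M) → P.inGM M a b → InA0N P M 1 a
  | step (a : A) (b b' : B) (a' : A) (n : ℕ) :
      (a, b') ∈ M → InA0N P M n a' → (a', b) ∈ M → P.inGM M a b → InA0N P M (n + 1) a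

variable {P : PrefSys A B} {M : Finset (A × B)}

lemma InA1.toN {a : A} (h : InA1 P M a) : ∃ n, InA1N P M n a := by
  induction h with
  | unmatched a h => exact ⟨1, .unmatched a h⟩
  | blockEdge y z a h1 h2 => exact ⟨1, .blockEdge y z a h1 h2⟩
  | step a b a' h1 h2 h3 ih =>
      obtain ⟨n, hn⟩ := ih
      exact ⟨n + 1, .step a b a' n hn h2 h3⟩

lemma InA0.toN {a : A} (h : InA0 P M a) : ∃ n, InA0N P M n a := by
  induction h with
  | blockEdge a z h => exact ⟨1, .blockEdge a z h⟩
  | stepUnmatched a b b' h1 h2 h3 => exact ⟨1, .stepUnmatched a b b' h1 h2 h3⟩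
  | step a b b' a' h1 h2 h3 h4 ih =>
      obtain ⟨n, hn⟩ := ih
      exact ⟨n + 1, .step a b b' a' n h1 hn h3 h4⟩

lemma InA1N.pos {n : ℕ} {a : A} (h : InA1N P M n a) : 1 ≤ n := by
  cases h <;> omega

lemma InA0N.pos {n : ℕ} {a : A} (h : InA0N P M n a) : 1 ≤ n := by
  cases h <;> omega

def minA1 (P : PrefSys A B) (M : Finset (A × B)) (n : ℕ) (a : A) : Prop :=
  InA1N P M n a ∧ ∀ m, InA1N P M m a → n ≤ m

def minA0 (P : PrefSys A B) (M : Finset (A × B)) (n : ℕ) (a : A) : Prop :=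
  InA0N P M n a ∧ ∀ m, InA0N P M m a → n ≤ m

lemma exists_minA1 {a : A} (h : ∃ n, InA1N P M n a) : ∃ n, minA1 P M n a := by
  classical
  exact ⟨Nat.find h, Nat.find_spec h, fun m hm => Nat.find_le hm⟩

lemma exists_minA0 {a : A} (h : ∃ n, InA0N P M n a) : ∃ n, minA0 P M n a := by
  classical
  exact ⟨Nat.find h, Nat.find_spec h, fun m hm => Nat.find_le hm⟩

lemma minA1_unique {a : A} {n m : ℕ} (h1 : minA1 P M n a) (h2 : minA1 P M m a) :
    n = m := le_antisymm (h1.2 m h2.1) (h2.2 n h1.1)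

lemma minA0_unique {a : A} {n m : ℕ} (h1 : minA0 P M n a) (h2 : minA0 P M m a) :
    n = m := le_antisymm (h1.2 m h2.1) (h2.2 n h1.1)

/-- A man reachable both ways, with the total size of the derivations. -/
def Bad (P : PrefSys A B) (M : Finset (A × B)) (n : ℕ) : Prop :=
  ∃ x : A, (∃ w, (x, w) ∈ M) ∧
    ∃ n1 n0, InA1N P M n1 x ∧ InA0N P M n0 x ∧ n = n1 + n0

/-- `v` carries a blocking edge of `N` (relative to `M`), and all of `v`'s
`M`-partners are unmatched in `N`. -/
def YspAt (P : PrefSys A B) (M N : Finset (A × B)) (v : A) (w : B) : Prop :=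
  (v, w) ∈ N ∧ (v, w) ∉ M ∧ P.voteAplus M v w ∧ P.voteBplus M v w ∧
    ∀ w₂, (v, w₂) ∈ M → ∀ u, (u, w₂) ∉ N

lemma YspAt.blocking {N : Finset (A × B)} {v : A} {w : B}
    (hN : P.IsMatching N) (h : YspAt P M N v w) : P.Blocking M v w :=
  ⟨hN.1 (v, w) h.1, h.2.1, h.2.2.1, h.2.2.2.1⟩

end PrefSys

namespace PrefSys

variable {A B : Type} [Fintype A] [Fintype B]
variable {P : PrefSys A B} {M : Finset (A × B)}

lemma popFalse (hpop : P.Popular M) {N : Finset (A × B)}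
    (hM : P.IsMatching M) (hN : P.IsMatching N)
    (H2 : ∀ a b, (a, b) ∈ N → (a, b) ∉ M → P.voteAplus M a b ∨ P.voteBplus M a b)
    (H3 : ∀ w, (∃ u, (u, w) ∈ M) → (∀ u, (u, w) ∉ N) →
      ∃ u w', (u, w) ∈ M ∧ (u, w') ∈ N ∧ (u, w') ∉ M ∧
        P.voteAplus M u w' ∧ P.voteBplus M u w')
    (H4 : ∀ v, (∃ b, (v, b) ∈ M) → (∀ b, (v, b) ∉ N) →
      ∃ b a', (v, b) ∈ M ∧ (a', b) ∈ N ∧ (a', b) ∉ M ∧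
        P.voteAplus M a' b ∧ P.voteBplus M a' b)
    (hdes : (∃ g, DesA P M N g) ∨ (∃ g, DesB P M N g)) : False := by
  have h1 := hpop.2 N hN
  have h2 := phi_lt_of_struct hM hN H2 H3 H4 hdes
  omega

lemma domFalse {N : Finset (A × B)}
    (hdom : ∀ M', P.IsMatching M' → M.card < M'.card → P.phi M' M < P.phi M M')
    (hM : P.IsMatching M) (hN : P.IsMatching N) (hcard : M.card < N.card)
    (H2 : ∀ a b, (a, b) ∈ N → (a, b) ∉ M → P.voteAplus M a b ∨ P.voteBplus M a b)
    (H3 : ∀ w, (∃ u, (u, w) ∈ M) → (∀ u, (u, w) ∉ N) →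
      ∃ u w', (u, w) ∈ M ∧ (u, w') ∈ N ∧ (u, w') ∉ M ∧
        P.voteAplus M u w' ∧ P.voteBplus M u w')
    (H4 : ∀ v, (∃ b, (v, b) ∈ M) → (∀ b, (v, b) ∉ N) →
      ∃ b a', (v, b) ∈ M ∧ (a', b) ∈ N ∧ (a', b) ∉ M ∧
        P.voteAplus M a' b ∧ P.voteBplus M a' b) : False := by
  have h1 := hdom N hN hcard
  have h2 := phi_le_of_struct hM hN H2 H3 H4
  omega

/-- An unmatched man on a blocking edge contradicts popularity. -/
lemma unmatched_blocking_false (hM : P.IsMatching M) (hpop : P.Popular M)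
    {x : A} {z : B} (hxu : ∀ b, (x, b) ∉ M) (hb : P.Blocking M x z) : False := by
  classical
  by_cases hz : ∃ u, (u, z) ∈ M
  · obtain ⟨u, hu⟩ := hz
    set N : Finset (A × B) := insert (x, z) (M.erase (u, z)) with hNdef
    have hmem : ∀ p : A × B, p ∈ N ↔ p = (x, z) ∨ (p ∈ M ∧ p ≠ (u, z)) := by
      intro p
      simp only [hNdef, Finset.mem_insert, Finset.mem_erase]
      tauto
    have hxzN : (x, z) ∈ N := (hmem _).2 (Or.inl rfl)
    have hN : P.IsMatching N := by
      refine isMatching_insert (isMatching_erase hM _) hb.1 ?_ ?_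
      · intro c hc
        exact hxu c (Finset.mem_of_mem_erase hc)
      · intro u' hu'
        have h1 := Finset.mem_of_mem_erase hu'
        have h2 := Finset.ne_of_mem_erase hu'
        exact h2 (by rw [matchB_unique hM h1 hu])
    have hgoodz : P.prefB N M z := prefB_intro hxzN hb.2.2.2
    have hgoodx : P.prefA N M x := ⟨z, hxzN, fun b' hb' => absurd hb' (hxu b')⟩
    refine popFalse hpop hM hN ?_ ?_ ?_ (Or.inl ⟨x, hgoodx, ?_, ?_⟩)
    · intro a b habN habM
      rcases (hmem _).1 habN with h | ⟨h, -⟩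
      · cases h; exact Or.inl hb.2.2.1
      · exact absurd h habM
    · intro w ⟨uw, huw⟩ hdef
      by_cases hwz : w = z
      · subst hwz; exact absurd hxzN (hdef x)
      · refine absurd ((hmem _).2 (Or.inr ⟨huw, ?_⟩)) (hdef uw)
        intro h; cases h; exact hwz rfl
    · intro v ⟨bv, hbv⟩ hdef
      by_cases hvu : v = u
      · subst hvu
        exact ⟨z, x, hu, hxzN, hb.2.1, hb.2.2.1, hb.2.2.2⟩
      · refine absurd ((hmem _).2 (Or.inr ⟨hbv, ?_⟩)) (hdef bv)
        intro h
        exact hvu (congrArg Prod.fst h)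
    · intro b hbN
      rcases (hmem _).1 hbN with h | ⟨h, -⟩
      · cases h
        exact fun hp => prefB_asymm hp hgoodz
      · exact absurd h (hxu b)
    · intro b hbm; exact absurd hbm (hxu b)
  · push_neg at hz
    set N : Finset (A × B) := insert (x, z) M with hNdef
    have hxzN : (x, z) ∈ N := Finset.mem_insert_self _ _
    have hN : P.IsMatching N := isMatching_insert hM hb.1 hxu hz
    have hgoodz : P.prefB N M z := prefB_intro hxzN hb.2.2.2
    have hgoodx : P.prefA N M x := ⟨z, hxzN, fun b' hb' => absurd hb' (hxu b')⟩
    refine popFalse hpop hM hN ?_ ?_ ?_ (Or.inl ⟨x, hgoodx, ?_, ?_⟩)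
    · intro a b habN habM
      rcases Finset.mem_insert.1 habN with h | h
      · cases h; exact Or.inl hb.2.2.1
      · exact absurd h habM
    · intro w ⟨uw, huw⟩ hdef
      exact absurd (Finset.mem_insert_of_mem huw) (hdef uw)
    · intro v ⟨bv, hbv⟩ hdef
      exact absurd (Finset.mem_insert_of_mem hbv) (hdef bv)
    · intro b hbN
      rcases Finset.mem_insert.1 hbN with h | h
      · cases h
        exact fun hp => prefB_asymm hp hgoodz
      · exact absurd h (hxu b)
    · intro b hbm; exact absurd hbm (hxu b)

end PrefSys

namespace PrefSys

variable {A B : Type}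

section Swap

variable {P : PrefSys A B} {M N : Finset (A × B)}

lemma mem_insert_erase {e e' p : A × B} :
    p ∈ insert e (N.erase e') ↔ p = e ∨ (p ∈ N ∧ p ≠ e') := by
  simp only [Finset.mem_insert, Finset.mem_erase]
  tauto

lemma mem_insert_erase₂ {e e1 e2 p : A × B} :
    p ∈ insert e ((N.erase e1).erase e2) ↔ p = e ∨ (p ∈ N ∧ p ≠ e1 ∧ p ≠ e2) := by
  simp only [Finset.mem_insert, Finset.mem_erase]
  tauto

/-- Persistence of `YspAt` under a swap step that removes an `M`-edge
`(a₂, b)` of `N` and matches `b` to a new man `a₁`. -/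
lemma YspAt.swap {u : A} {w' : B} (h : YspAt P M N u w') {a₁ a₂ : A} {b : B}
    (he : (a₂, b) ∈ M) (heN : (a₂, b) ∈ N) :
    YspAt P M (insert (a₁, b) (N.erase (a₂, b))) u w' := by
  obtain ⟨h1, h2, h3, h4, h5⟩ := h
  refine ⟨mem_insert_erase.2 (Or.inr ⟨h1, fun hc => h2 (hc ▸ he)⟩), h2, h3, h4, ?_⟩
  intro w₂ hw₂ v₂ hv₂
  rcases mem_insert_erase.1 hv₂ with hc | ⟨hc, -⟩
  · cases hc
    exact h5 _ hw₂ a₂ heN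
  · exact h5 _ hw₂ _ hc

end Swap

/-- The invariant carried while unwinding the `A₁`-derivation of `x`:
`N` is the partially flipped matching in which `x` has become unmatched. -/
structure StA1 (P : PrefSys A B) (M : Finset (A × B)) (x : A) (n1 : ℕ)
    (N : Finset (A × B)) : Prop where
  mtch : P.IsMatching N
  s2 : ∀ a b, (a, b) ∈ N → (a, b) ∉ M → P.voteAplus M a b ∨ P.voteBplus M a b
  s3 : ∀ v, v ≠ x → (∃ b, (v, b) ∈ M) → ∃ b, (v, b) ∈ N
  s3x : ∀ b, (x, b) ∉ N
  s4 : ∀ w, (∃ u, (u, w) ∈ M) → (∀ u, (u, w) ∉ N) →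
      ∃ u w', (u, w) ∈ M ∧ YspAt P M N u w'
  s7 : ∀ a w, (a, w) ∈ N → ∃ u, (u, w) ∈ M
  s8 : N.card = M.card ∨ ∃ v w, YspAt P M N v w
  s9 : n1 = 1 → ∃ p zz, YspAt P M N p zz ∧ (x, zz) ∈ M
  s5 : ∀ v b, (v, b) ∈ M → (v, b) ∉ N →
      v = x ∨ (∃ p, YspAt P M N p b) ∨ (∃ w', YspAt P M N v w') ∨
      (∃ nv, minA1 P M nv v ∧ 2 ≤ nv ∧ nv < n1 ∧
        ∀ m, InA1N P M m v → InA1N P M (m + (n1 - nv)) x)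

/-- The invariant carried while unwinding the `A₀`-derivation:
`fr` is the current front (unmatched in `N`). -/
structure StA0 (P : PrefSys A B) (M : Finset (A × B)) (x : A) (n1 n0 : ℕ)
    (fr : A) (nfr : ℕ) (N : Finset (A × B)) : Prop where
  mtch : P.IsMatching N
  s2 : ∀ a b, (a, b) ∈ N → (a, b) ∉ M → P.voteAplus M a b ∨ P.voteBplus M a b
  s3 : ∀ v, v ≠ fr → (∃ b, (v, b) ∈ M) → ∃ b, (v, b) ∈ N
  s3x : ∀ b, (fr, b) ∉ N
  s3m : ∃ w, (fr, w) ∈ M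
  s4 : ∀ w, (∃ u, (u, w) ∈ M) → (∀ u, (u, w) ∉ N) →
      ∃ u w', (u, w) ∈ M ∧ YspAt P M N u w'
  s7 : ∀ a w, (a, w) ∈ N → ∃ u, (u, w) ∈ M
  s8 : N.card = M.card ∨ ∃ v w, YspAt P M N v w
  s9 : n1 = 1 → ∃ p zz, YspAt P M N p zz ∧ (x, zz) ∈ M
  s5 : ∀ v b, (v, b) ∈ M → (v, b) ∉ N →
      v = fr ∨ (∃ p, YspAt P M N p b) ∨ (∃ w', YspAt P M N v w') ∨
      (∃ nv, minA1 P M nv v ∧ 2 ≤ nv ∧ nv < n1 ∧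
        ∀ m, InA1N P M m v → InA1N P M (m + (n1 - nv)) x) ∨
      (∃ nv, minA0 P M nv v ∧ nfr < nv ∧
        ((v = x ∧ nv = n0 ∧ 2 ≤ n1) ∨ nv < n0))

end PrefSys

namespace PrefSys

variable {A B : Type} [Fintype A] [Fintype B]
variable {P : PrefSys A B} {M : Finset (A × B)}

lemma phaseA1 (hM : P.IsMatching M) (hpop : P.Popular M) :
    ∀ n1 x, minA1 P M n1 x → (∃ w, (x, w) ∈ M) → ∃ N, StA1 P M x n1 N := by
  intro n1
  induction n1 using Nat.strong_induction_on with
  | _ n1 ih =>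
  intro x hmin hxm
  obtain ⟨hm1, hm2⟩ := hmin
  cases hm1 with
  | unmatched _ h =>
      obtain ⟨w, hw⟩ := hxm
      exact absurd hw (h w)
  | blockEdge y z _ hb hz =>
      by_cases hym : ∃ w, (y, w) ∈ M
      · obtain ⟨by_, hby⟩ := hym
        have hyznm : (y, z) ∉ M := hb.2.1
        have hyx : y ≠ x := fun h => hyznm (h ▸ hz)
        have hbyz : by_ ≠ z := fun h => hyx (matchB_unique hM (h ▸ hby) hz)
        refine ⟨insert (y, z) ((M.erase (x, z)).erase (y, by_)), ?_⟩
        set N := insert (y, z) ((M.erase (x, z)).erase (y, by_)) with hNdef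
        have hmem : ∀ p : A × B,
            p ∈ N ↔ p = (y, z) ∨ (p ∈ M ∧ p ≠ (x, z) ∧ p ≠ (y, by_)) :=
          fun p => mem_insert_erase₂
        have hyzN : (y, z) ∈ N := (hmem _).2 (Or.inl rfl)
        have hYsp : YspAt P M N y z := by
          refine ⟨hyzN, hyznm, hb.2.2.1, hb.2.2.2, ?_⟩
          intro w₂ hw₂ u hu
          have hw₂by : w₂ = by_ := matchA_unique hM hw₂ hby
          subst hw₂by
          rcases (hmem _).1 hu with hc | ⟨hc, -, hc2⟩
          · exact hbyz (congrArg Prod.snd hc)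
          · exact hc2 (by rw [matchB_unique hM hc hby])
        have hmtch : P.IsMatching N := by
          refine isMatching_insert (isMatching_erase (isMatching_erase hM _) _) hb.1 ?_ ?_
          · intro c hc
            have h1 := Finset.mem_of_mem_erase (Finset.mem_of_mem_erase hc)
            have h2 := Finset.ne_of_mem_erase hc
            exact h2 (by rw [matchA_unique hM h1 hby])
          · intro u hu
            have h1 := Finset.mem_of_mem_erase (Finset.mem_of_mem_erase hu)
            have h2 := Finset.ne_of_mem_erase (Finset.mem_of_mem_erase hu)
            exact h2 (by rw [matchB_unique hM h1 hz])
        refine ⟨hmtch, ?_, ?_, ?_, ?_, ?_, ?_, ?_, ?_⟩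
        · intro a c hcN hcM
          rcases (hmem _).1 hcN with h | ⟨h, -⟩
          · cases h; exact Or.inl hb.2.2.1
          · exact absurd h hcM
        · intro v hv hvm
          by_cases hvy : v = y
          · subst hvy; exact ⟨z, hyzN⟩
          · obtain ⟨c, hc⟩ := hvm
            refine ⟨c, (hmem _).2 (Or.inr ⟨hc, ?_, ?_⟩)⟩
            · intro h; exact hv (congrArg Prod.fst h)
            · intro h; exact hvy (congrArg Prod.fst h)
        · intro c hc
          rcases (hmem _).1 hc with h | ⟨h, h1, -⟩
          · exact hyx (congrArg Prod.fst h).symm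
          · exact h1 (by rw [matchA_unique hM h hz])
        · intro w hwm hdef
          obtain ⟨uw, huw⟩ := hwm
          by_cases hwz : w = z
          · subst hwz; exact absurd hyzN (hdef y)
          · by_cases hwby : w = by_
            · subst hwby; exact ⟨y, z, hby, hYsp⟩
            · refine absurd ((hmem _).2 (Or.inr ⟨huw, ?_, ?_⟩)) (hdef uw)
              · intro h; exact hwz (congrArg Prod.snd h)
              · intro h; exact hwby (congrArg Prod.snd h)
        · intro a w hw
          rcases (hmem _).1 hw with h | ⟨h, -⟩
          · cases h; exact ⟨x, hz⟩
          · exact ⟨a, h⟩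
        · exact Or.inr ⟨y, z, hYsp⟩
        · intro _; exact ⟨y, z, hYsp, hz⟩
        · intro v c hvc hvcN
          by_cases hvx : v = x
          · exact Or.inl hvx
          · by_cases hvy : v = y
            · subst hvy
              exact Or.inr (Or.inr (Or.inl ⟨z, hYsp⟩))
            · exact absurd ((hmem _).2 (Or.inr ⟨hvc,
                fun h => hvx (congrArg Prod.fst h),
                fun h => hvy (congrArg Prod.fst h)⟩)) hvcN
      · push_neg at hym
        exact (unmatched_blocking_false hM hpop hym hb).elim
  | step _ b x' n hstep hgm hab =>
      have hnpos : 1 ≤ n := hstep.pos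
      have hmin' : minA1 P M (n + 1) x := ⟨.step x b x' n hstep hgm hab, hm2⟩
      have hminx' : minA1 P M n x' := by
        refine ⟨hstep, fun m hm => ?_⟩
        have := hm2 (m + 1) (.step x b x' m hm hgm hab)
        omega
      by_cases hx'm : ∃ w, (x', w) ∈ M
      case neg =>
        push_neg at hx'm
        have hx'x : x' ≠ x := by
          intro h; rw [h] at hx'm; exact hx'm b hab
        refine ⟨insert (x', b) (M.erase (x, b)), ?_⟩
        set N := insert (x', b) (M.erase (x, b)) with hNdef
        have hmem : ∀ p : A × B, p ∈ N ↔ p = (x', b) ∨ (p ∈ M ∧ p ≠ (x, b)) :=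
          fun p => mem_insert_erase
        have hx'bN : (x', b) ∈ N := (hmem _).2 (Or.inl rfl)
        have hx'bnm : (x', b) ∉ M := hx'm b
        have hmtch : P.IsMatching N := by
          refine isMatching_insert (isMatching_erase hM _) hgm.1 ?_ ?_
          · intro c hc; exact hx'm c (Finset.mem_of_mem_erase hc)
          · intro u hu
            have h1 := Finset.mem_of_mem_erase hu
            have h2 := Finset.ne_of_mem_erase hu
            exact h2 (by rw [matchB_unique hM h1 hab])
        refine ⟨hmtch, ?_, ?_, ?_, ?_, ?_, ?_, ?_, ?_⟩
        · intro a c hcN hcM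
          rcases (hmem _).1 hcN with h | ⟨h, -⟩
          · cases h; exact vote_of_inGM hgm hx'bnm
          · exact absurd h hcM
        · intro v hv hvm
          by_cases hvx' : v = x'
          · subst hvx'; exact ⟨b, hx'bN⟩
          · obtain ⟨c, hc⟩ := hvm
            exact ⟨c, (hmem _).2 (Or.inr ⟨hc, fun h => hv (congrArg Prod.fst h)⟩)⟩
        · intro c hc
          rcases (hmem _).1 hc with h | ⟨h, h1⟩
          · exact hx'x (congrArg Prod.fst h).symm
          · exact h1 (by rw [matchA_unique hM h hab])
        · intro w hwm hdef
          obtain ⟨uw, huw⟩ := hwm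
          by_cases hwb : w = b
          · subst hwb; exact absurd hx'bN (hdef x')
          · exact absurd ((hmem _).2 (Or.inr ⟨huw,
              fun h => hwb (congrArg Prod.snd h)⟩)) (hdef uw)
        · intro a w hw
          rcases (hmem _).1 hw with h | ⟨h, -⟩
          · cases h; exact ⟨x, hab⟩
          · exact ⟨a, h⟩
        · left
          have h1 : (x', b) ∉ M.erase (x, b) :=
            fun h => hx'm b (Finset.mem_of_mem_erase h)
          have h2 : 1 ≤ M.card := Finset.card_pos.2 ⟨(x, b), hab⟩
          rw [hNdef, Finset.card_insert_of_notMem h1, Finset.card_erase_of_mem hab]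
          omega
        · intro h; exact absurd h (by omega)
        · intro v c hvc hvcN
          by_cases hvx : v = x
          · exact Or.inl hvx
          · exact absurd ((hmem _).2 (Or.inr ⟨hvc,
              fun h => hvx (congrArg Prod.fst h)⟩)) hvcN
      case pos =>
        obtain ⟨N', st'⟩ := ih n (by omega) x' hminx' hx'm
        have hx'x : x' ≠ x := by
          intro h
          subst h
          have := minA1_unique hminx' hmin'
          omega
        have hx'bnm : (x', b) ∉ M := fun h => hx'x (matchB_unique hM h hab)
        by_cases hxbN : (x, b) ∈ N'
        · refine ⟨insert (x', b) (N'.erase (x, b)), ?_⟩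
          set N := insert (x', b) (N'.erase (x, b)) with hNdef
          have hmem : ∀ p : A × B, p ∈ N ↔ p = (x', b) ∨ (p ∈ N' ∧ p ≠ (x, b)) :=
            fun p => mem_insert_erase
          have hx'bN : (x', b) ∈ N := (hmem _).2 (Or.inl rfl)
          have hmtch : P.IsMatching N := by
            refine isMatching_insert (isMatching_erase st'.mtch _) hgm.1 ?_ ?_
            · intro c hc; exact st'.s3x c (Finset.mem_of_mem_erase hc)
            · intro u hu
              have h1 := Finset.mem_of_mem_erase hu
              have h2 := Finset.ne_of_mem_erase hu
              exact h2 (by rw [matchB_unique st'.mtch h1 hxbN])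
          refine ⟨hmtch, ?_, ?_, ?_, ?_, ?_, ?_, ?_, ?_⟩
          · intro a c hcN hcM
            rcases (hmem _).1 hcN with h | ⟨h, -⟩
            · cases h; exact vote_of_inGM hgm hx'bnm
            · exact st'.s2 a c h hcM
          · intro v hv hvm
            by_cases hvx' : v = x'
            · subst hvx'; exact ⟨b, hx'bN⟩
            · obtain ⟨c, hc⟩ := st'.s3 v hvx' hvm
              exact ⟨c, (hmem _).2 (Or.inr ⟨hc, fun h => hv (congrArg Prod.fst h)⟩)⟩
          · intro c hc
            rcases (hmem _).1 hc with h | ⟨h, h1⟩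
            · exact hx'x (congrArg Prod.fst h).symm
            · exact h1 (by rw [matchA_unique st'.mtch h hxbN])
          · intro w hwm hdef
            by_cases hwb : w = b
            · subst hwb; exact absurd hx'bN (hdef x')
            · have hdef' : ∀ u, (u, w) ∉ N' := by
                intro u hu
                exact hdef u ((hmem _).2 (Or.inr ⟨hu, fun h => hwb (congrArg Prod.snd h)⟩))
              obtain ⟨u, w', hum, hY⟩ := st'.s4 w hwm hdef'
              exact ⟨u, w', hum, hY.swap hab hxbN⟩
          · intro a w hw
            rcases (hmem _).1 hw with h | ⟨h, -⟩
            · cases h; exact ⟨x, hab⟩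
            · exact st'.s7 a w h
          · have hcard : N.card = N'.card := by
              have h1 : (x', b) ∉ N'.erase (x, b) :=
                fun h => st'.s3x b (Finset.mem_of_mem_erase h)
              have h2 : 1 ≤ N'.card := Finset.card_pos.2 ⟨(x, b), hxbN⟩
              rw [hNdef, Finset.card_insert_of_notMem h1, Finset.card_erase_of_mem hxbN]
              omega
            rcases st'.s8 with h | ⟨v, w, hY⟩
            · left; rw [hcard, h]
            · right; exact ⟨v, w, hY.swap hab hxbN⟩
          · intro h; exact absurd h (by omega)
          · intro v c hvc hvcN
            by_cases hvx : v = x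
            · exact Or.inl hvx
            · have hvcN' : (v, c) ∉ N' := by
                intro h
                exact hvcN ((hmem _).2 (Or.inr ⟨h, fun hh => hvx (congrArg Prod.fst hh)⟩))
              rcases st'.s5 v c hvc hvcN' with h | ⟨p, hY⟩ | ⟨w', hY⟩ | ⟨nv, hmv, h2, hlt, cont⟩
              · by_cases hn1 : n = 1
                · obtain ⟨p, zz, hY, hx'zz⟩ := st'.s9 hn1
                  have hvc' : (x', c) ∈ M := by rw [← h]; exact hvc
                  have hczz : c = zz := matchA_unique hM hvc' hx'zz
                  subst hczz
                  exact Or.inr (Or.inl ⟨p, hY.swap hab hxbN⟩)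
                · have hminv : minA1 P M n v := by rw [h]; exact hminx'
                  refine Or.inr (Or.inr (Or.inr ⟨n, hminv, by omega, by omega, ?_⟩))
                  intro m hm
                  have hm' : InA1N P M m x' := by rw [← h]; exact hm
                  have hres : InA1N P M (m + 1) x := .step x b x' m hm' hgm hab
                  have harith : m + (n + 1 - n) = m + 1 := by omega
                  rw [harith]
                  exact hres
              · exact Or.inr (Or.inl ⟨p, hY.swap hab hxbN⟩)
              · exact Or.inr (Or.inr (Or.inl ⟨w', hY.swap hab hxbN⟩))
              · refine Or.inr (Or.inr (Or.inr ⟨nv, hmv, h2, by omega, ?_⟩))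
                intro m hm
                have hres := cont m hm
                have hres2 : InA1N P M ((m + (n - nv)) + 1) x := .step x b x' _ hres hgm hab
                have harith : m + (n + 1 - nv) = (m + (n - nv)) + 1 := by omega
                rw [harith]
                exact hres2
        · rcases st'.s5 x b hab hxbN with h | ⟨p, hY⟩ | ⟨w'', hY⟩ | ⟨nv, hmv, h2, hlt, -⟩
          · exact absurd h.symm hx'x
          · have h1 : InA1N P M 1 x := .blockEdge p b x (hY.blocking st'.mtch) hab
            have := hm2 1 h1
            omega
          · have hbN' : ∀ u, (u, b) ∉ N' := hY.2.2.2.2 b hab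
            have hmtch'' : P.IsMatching (insert (x', b) N') :=
              isMatching_insert st'.mtch hgm.1 st'.s3x hbN'
            have hxw'' : (x, w'') ∈ insert (x', b) N' := Finset.mem_insert_of_mem hY.1
            have hgoodx : P.prefA (insert (x', b) N') M x := ⟨w'', hxw'', hY.2.2.1⟩
            have hgoodw : P.prefB (insert (x', b) N') M w'' := ⟨x, hxw'', hY.2.2.2.1⟩
            refine (popFalse hpop hM hmtch'' ?_ ?_ ?_ (Or.inr ⟨w'', hgoodw, ?_, ?_⟩)).elim
            · intro a c hcN hcM
              rcases Finset.mem_insert.1 hcN with h | h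
              · cases h; exact vote_of_inGM hgm hx'bnm
              · exact st'.s2 a c h hcM
            · intro w hwm hdef
              have hdef' : ∀ u, (u, w) ∉ N' := fun u hu => hdef u (Finset.mem_insert_of_mem hu)
              obtain ⟨u, w', hum, hYu⟩ := st'.s4 w hwm hdef'
              exact ⟨u, w', hum, Finset.mem_insert_of_mem hYu.1, hYu.2.1,
                hYu.2.2.1, hYu.2.2.2.1⟩
            · intro v hvm hdef
              by_cases hvx' : v = x'
              · subst hvx'; exact absurd (Finset.mem_insert_self _ _) (hdef b)
              · obtain ⟨c, hc⟩ := st'.s3 v hvx' hvm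
                exact absurd (Finset.mem_insert_of_mem hc) (hdef c)
            · intro a haw
              rcases Finset.mem_insert.1 haw with h | h
              · exfalso
                have hwb : w'' = b := congrArg Prod.snd h
                rw [hwb] at hY
                exact hbN' x hY.1
              · have hax : a = x := matchB_unique st'.mtch h hY.1
                subst hax
                exact fun hp => prefA_asymm hp hgoodx
            · intro a haw
              by_cases hax' : a = x'
              · subst hax'; exact ⟨b, Finset.mem_insert_self _ _⟩
              · obtain ⟨c, hc⟩ := st'.s3 a hax' ⟨w'', haw⟩
                exact ⟨c, Finset.mem_insert_of_mem hc⟩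
          · have := minA1_unique hmv hmin'
            omega

end PrefSys

namespace PrefSys

variable {A B : Type} [Fintype A] [Fintype B]
variable {P : PrefSys A B} {M : Finset (A × B)}

lemma StA1.toStA0 {x : A} {n1 n0 : ℕ} {N : Finset (A × B)}
    (st : StA1 P M x n1 N) (hxm : ∃ w, (x, w) ∈ M) :
    StA0 P M x n1 n0 x n0 N := by
  refine ⟨st.mtch, st.s2, st.s3, st.s3x, hxm, st.s4, st.s7, st.s8, st.s9, ?_⟩
  intro v b h1 h2
  rcases st.s5 v b h1 h2 with h | h | h | h
  · exact Or.inl h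
  · exact Or.inr (Or.inl h)
  · exact Or.inr (Or.inr (Or.inl h))
  · exact Or.inr (Or.inr (Or.inr (Or.inl h)))

lemma phaseA0 (hM : P.IsMatching M) (hpop : P.Popular M)
    (hdom : ∀ M', P.IsMatching M' → M.card < M'.card → P.phi M' M < P.phi M M')
    {x : A} {n1 n0 : ℕ} (hx1 : minA1 P M n1 x) (hx0 : minA0 P M n0 x)
    (hmin : ∀ m, m < n1 + n0 → ¬ Bad P M m) :
    ∀ nfr fr N, minA0 P M nfr fr → nfr ≤ n0 →
      ((fr = x ∧ nfr = n0) ∨ nfr < n0) → StA0 P M x n1 n0 fr nfr N → False := by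
  intro nfr
  induction nfr using Nat.strong_induction_on with
  | _ nfr ih =>
  intro fr N hfrmin hle hC st
  obtain ⟨hf1, hf2⟩ := hfrmin
  have hn1pos : 1 ≤ n1 := hx1.1.pos
  -- every `M`-partner of `fr` is matched in `N`
  have hwf : ∀ w, (fr, w) ∈ M → ∃ a'', (a'', w) ∈ N := by
    intro w hw
    by_contra hno
    push_neg at hno
    obtain ⟨u, w', hum, hYu⟩ := st.s4 w ⟨fr, hw⟩ hno
    have hufr : u = fr := matchB_unique hM hum hw
    rw [hufr] at hYu
    exact st.s3x w' hYu.1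
  cases hf1 with
  | blockEdge _ z' hb =>
      by_cases hzm : ∃ u, (u, z') ∈ M
      · obtain ⟨xz, hxz⟩ := hzm
        have hxzfr : xz ≠ fr := fun h => hb.2.1 (h ▸ hxz)
        by_cases hxzN : (xz, z') ∈ N
        · -- terminal swap construction
          set N' := insert (fr, z') (N.erase (xz, z')) with hN'def
          have hmem : ∀ p : A × B, p ∈ N' ↔ p = (fr, z') ∨ (p ∈ N ∧ p ≠ (xz, z')) :=
            fun p => mem_insert_erase
          have hfz : (fr, z') ∈ N' := (hmem _).2 (Or.inl rfl)
          have hmtch : P.IsMatching N' := by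
            refine isMatching_insert (isMatching_erase st.mtch _) hb.1 ?_ ?_
            · intro c hc; exact st.s3x c (Finset.mem_of_mem_erase hc)
            · intro u hu
              have h1 := Finset.mem_of_mem_erase hu
              have h2 := Finset.ne_of_mem_erase hu
              exact h2 (by rw [matchB_unique st.mtch h1 hxzN])
          have hgoodfr : P.prefA N' M fr := ⟨z', hfz, hb.2.2.1⟩
          have hgoodz' : P.prefB N' M z' := ⟨fr, hfz, hb.2.2.2⟩
          refine popFalse hpop hM hmtch ?_ ?_ ?_ (Or.inl ⟨fr, hgoodfr, ?_, ?_⟩)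
          · intro a c hcN hcM
            rcases (hmem _).1 hcN with h | ⟨h, -⟩
            · cases h; exact Or.inl hb.2.2.1
            · exact st.s2 a c h hcM
          · intro w hwm hdef
            by_cases hwz : w = z'
            · subst hwz; exact absurd hfz (hdef fr)
            · have hdef' : ∀ u, (u, w) ∉ N := by
                intro u hu
                exact hdef u ((hmem _).2 (Or.inr ⟨hu, fun h => hwz (congrArg Prod.snd h)⟩))
              obtain ⟨u, w', hum, hY⟩ := st.s4 w hwm hdef'
              refine ⟨u, w', hum, (hmem _).2 (Or.inr ⟨hY.1, fun h => hY.2.1 (h ▸ hxz)⟩),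
                hY.2.1, hY.2.2.1, hY.2.2.2.1⟩
          · intro v hvm hdef
            by_cases hvxz : v = xz
            · subst hvxz
              exact ⟨z', fr, hxz, hfz, hb.2.1, hb.2.2.1, hb.2.2.2⟩
            · by_cases hvfr : v = fr
              · subst hvfr; exact absurd hfz (hdef z')
              · obtain ⟨c, hc⟩ := st.s3 v hvfr hvm
                refine absurd ((hmem _).2 (Or.inr ⟨hc, ?_⟩)) (hdef c)
                intro h; exact hvxz (congrArg Prod.fst h)
          · intro bq hbq
            rcases (hmem _).1 hbq with h | ⟨h, -⟩
            · cases h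
              exact fun hp => prefB_asymm hp hgoodz'
            · exact absurd h (st.s3x bq)
          · intro bq hbq
            obtain ⟨a'', ha''⟩ := hwf bq hbq
            refine ⟨a'', (hmem _).2 (Or.inr ⟨ha'', ?_⟩)⟩
            intro h
            have hbqz : bq = z' := congrArg Prod.snd h
            have hbq' : (fr, z') ∈ M := by rw [← hbqz]; exact hbq
            exact hxzfr (matchB_unique hM hxz hbq')
        · rcases st.s5 xz z' hxz hxzN with h | ⟨p, hY⟩ | ⟨w'', hY⟩ |
            ⟨nv, hmv, h2, hlt, cont⟩ | ⟨nv, hmv, hgt, hor⟩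
          · exact hxzfr h
          · -- restore construction
            have hpz'N : (p, z') ∈ N := hY.1
            have hpfr : p ≠ fr := fun h => st.s3x z' (h ▸ hpz'N)
            have hpxz : p ≠ xz := fun h => hxzN (h ▸ hpz'N)
            set N'' := insert (fr, z') (N.erase (p, z')) with hN''def
            have hmem2 : ∀ q : A × B, q ∈ N'' ↔ q = (fr, z') ∨ (q ∈ N ∧ q ≠ (p, z')) :=
              fun q => mem_insert_erase
            have hfz : (fr, z') ∈ N'' := (hmem2 _).2 (Or.inl rfl)
            have hmtch'' : P.IsMatching N'' := by
              refine isMatching_insert (isMatching_erase st.mtch _) hb.1 ?_ ?_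
              · intro c hc; exact st.s3x c (Finset.mem_of_mem_erase hc)
              · intro u hu
                have h1 := Finset.mem_of_mem_erase hu
                have h2 := Finset.ne_of_mem_erase hu
                exact h2 (by rw [matchB_unique st.mtch h1 hpz'N])
            by_cases hpm : ∃ w, (p, w) ∈ M
            · obtain ⟨mp, hmp⟩ := hpm
              have hmpN : ∀ u, (u, mp) ∉ N := hY.2.2.2.2 mp hmp
              have hmpz' : mp ≠ z' := fun h => hY.2.1 (h ▸ hmp)
              set N₃ := insert (p, mp) N'' with hN₃def
              have hmem3 : ∀ q : A × B,
                  q ∈ N₃ ↔ q = (p, mp) ∨ q = (fr, z') ∨ (q ∈ N ∧ q ≠ (p, z')) := by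
                intro q
                rw [hN₃def, Finset.mem_insert, hmem2 q]
              have hpmp3 : (p, mp) ∈ N₃ := (hmem3 _).2 (Or.inl rfl)
              have hfz3 : (fr, z') ∈ N₃ := (hmem3 _).2 (Or.inr (Or.inl rfl))
              have hmtch3 : P.IsMatching N₃ := by
                refine isMatching_insert hmtch'' (hM.1 (p, mp) hmp) ?_ ?_
                · intro c hc
                  rcases (hmem2 _).1 hc with h | ⟨h, h1⟩
                  · exact hpfr (congrArg Prod.fst h)
                  · exact h1 (by rw [matchA_unique st.mtch h hpz'N])
                · intro u hu
                  rcases (hmem2 _).1 hu with h | ⟨h, -⟩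
                  · exact hmpz' (congrArg Prod.snd h)
                  · exact hmpN u h
              have hgoodfr : P.prefA N₃ M fr := ⟨z', hfz3, hb.2.2.1⟩
              have hgoodz' : P.prefB N₃ M z' := ⟨fr, hfz3, hb.2.2.2⟩
              refine popFalse hpop hM hmtch3 ?_ ?_ ?_ (Or.inl ⟨fr, hgoodfr, ?_, ?_⟩)
              · intro a c hcN hcM
                rcases (hmem3 _).1 hcN with h | h | ⟨h, -⟩
                · cases h; exact absurd hmp hcM
                · cases h; exact Or.inl hb.2.2.1
                · exact st.s2 a c h hcM
              · intro w hwm hdef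
                by_cases hwmp : w = mp
                · subst hwmp; exact absurd hpmp3 (hdef p)
                · by_cases hwz : w = z'
                  · subst hwz; exact absurd hfz3 (hdef fr)
                  · have hdef' : ∀ u, (u, w) ∉ N := by
                      intro u hu
                      exact hdef u ((hmem3 _).2 (Or.inr (Or.inr
                        ⟨hu, fun h => hwz (congrArg Prod.snd h)⟩)))
                    obtain ⟨u, w', hum, hYu⟩ := st.s4 w hwm hdef'
                    refine ⟨u, w', hum, (hmem3 _).2 (Or.inr (Or.inr ⟨hYu.1, ?_⟩)),
                      hYu.2.1, hYu.2.2.1, hYu.2.2.2.1⟩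
                    intro h
                    have hup : u = p := congrArg Prod.fst h
                    rw [hup] at hum
                    exact hwmp (matchA_unique hM hum hmp)
              · intro v hvm hdef
                by_cases hvp : v = p
                · subst hvp; exact absurd hpmp3 (hdef mp)
                · by_cases hvfr : v = fr
                  · subst hvfr; exact absurd hfz3 (hdef z')
                  · obtain ⟨c, hc⟩ := st.s3 v hvfr hvm
                    refine absurd ((hmem3 _).2 (Or.inr (Or.inr ⟨hc, ?_⟩))) (hdef c)
                    intro h; exact hvp (congrArg Prod.fst h)
              · intro bq hbq
                rcases (hmem3 _).1 hbq with h | h | ⟨h, -⟩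
                · exact absurd (congrArg Prod.fst h) hpfr.symm
                · cases h
                  exact fun hp => prefB_asymm hp hgoodz'
                · exact absurd h (st.s3x bq)
              · intro bq hbq
                obtain ⟨a'', ha''⟩ := hwf bq hbq
                refine ⟨a'', (hmem3 _).2 (Or.inr (Or.inr ⟨ha'', ?_⟩))⟩
                intro h
                have hbqz : bq = z' := congrArg Prod.snd h
                have hbq' : (fr, z') ∈ M := by rw [← hbqz]; exact hbq
                exact hxzfr (matchB_unique hM hxz hbq')
            · push_neg at hpm
              have hgoodfr : P.prefA N'' M fr := ⟨z', hfz, hb.2.2.1⟩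
              have hgoodz' : P.prefB N'' M z' := ⟨fr, hfz, hb.2.2.2⟩
              refine popFalse hpop hM hmtch'' ?_ ?_ ?_ (Or.inl ⟨fr, hgoodfr, ?_, ?_⟩)
              · intro a c hcN hcM
                rcases (hmem2 _).1 hcN with h | ⟨h, -⟩
                · cases h; exact Or.inl hb.2.2.1
                · exact st.s2 a c h hcM
              · intro w hwm hdef
                by_cases hwz : w = z'
                · subst hwz; exact absurd hfz (hdef fr)
                · have hdef' : ∀ u, (u, w) ∉ N := by
                    intro u hu
                    exact hdef u ((hmem2 _).2 (Or.inr
                      ⟨hu, fun h => hwz (congrArg Prod.snd h)⟩))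
                  obtain ⟨u, w', hum, hYu⟩ := st.s4 w hwm hdef'
                  refine ⟨u, w', hum, (hmem2 _).2 (Or.inr ⟨hYu.1, ?_⟩),
                    hYu.2.1, hYu.2.2.1, hYu.2.2.2.1⟩
                  intro h
                  have hup : u = p := congrArg Prod.fst h
                  rw [hup] at hum
                  exact hpm w hum
              · intro v hvm hdef
                by_cases hvfr : v = fr
                · subst hvfr; exact absurd hfz (hdef z')
                · have hvp : v ≠ p := by
                    rintro rfl
                    obtain ⟨c, hc⟩ := hvm
                    exact hpm c hc
                  obtain ⟨c, hc⟩ := st.s3 v hvfr hvm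
                  refine absurd ((hmem2 _).2 (Or.inr ⟨hc, ?_⟩)) (hdef c)
                  intro h; exact hvp (congrArg Prod.fst h)
              · intro bq hbq
                rcases (hmem2 _).1 hbq with h | ⟨h, -⟩
                · cases h
                  exact fun hp => prefB_asymm hp hgoodz'
                · exact absurd h (st.s3x bq)
              · intro bq hbq
                obtain ⟨a'', ha''⟩ := hwf bq hbq
                refine ⟨a'', (hmem2 _).2 (Or.inr ⟨ha'', ?_⟩)⟩
                intro h
                have hbqz : bq = z' := congrArg Prod.snd h
                have hbq' : (fr, z') ∈ M := by rw [← hbqz]; exact hbq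
                exact hxzfr (matchB_unique hM hxz hbq')
          · -- xz itself is the Ysp man: `z'` is unmatched in `N`
            have hz'N : ∀ u, (u, z') ∉ N := hY.2.2.2.2 z' hxz
            set N' := insert (fr, z') N with hN'def
            have hfz : (fr, z') ∈ N' := Finset.mem_insert_self _ _
            have hmtch' : P.IsMatching N' := isMatching_insert st.mtch hb.1 st.s3x hz'N
            have hgoodfr : P.prefA N' M fr := ⟨z', hfz, hb.2.2.1⟩
            have hgoodz' : P.prefB N' M z' := ⟨fr, hfz, hb.2.2.2⟩
            refine popFalse hpop hM hmtch' ?_ ?_ ?_ (Or.inl ⟨fr, hgoodfr, ?_, ?_⟩)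
            · intro a c hcN hcM
              rcases Finset.mem_insert.1 hcN with h | h
              · cases h; exact Or.inl hb.2.2.1
              · exact st.s2 a c h hcM
            · intro w hwm hdef
              have hdef' : ∀ u, (u, w) ∉ N := fun u hu => hdef u (Finset.mem_insert_of_mem hu)
              obtain ⟨u, w', hum, hYu⟩ := st.s4 w hwm hdef'
              exact ⟨u, w', hum, Finset.mem_insert_of_mem hYu.1, hYu.2.1,
                hYu.2.2.1, hYu.2.2.2.1⟩
            · intro v hvm hdef
              by_cases hvfr : v = fr
              · subst hvfr; exact absurd hfz (hdef z')
              · obtain ⟨c, hc⟩ := st.s3 v hvfr hvm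
                exact absurd (Finset.mem_insert_of_mem hc) (hdef c)
            · intro bq hbq
              rcases Finset.mem_insert.1 hbq with h | h
              · cases h
                exact fun hp => prefB_asymm hp hgoodz'
              · exact absurd h (st.s3x bq)
            · intro bq hbq
              obtain ⟨a'', ha''⟩ := hwf bq hbq
              exact ⟨a'', Finset.mem_insert_of_mem ha''⟩
          · -- continuation contradiction
            have h1 : InA1N P M 1 xz := .blockEdge fr z' xz hb hxz
            have h2' := cont 1 h1
            have := hx1.2 _ h2'
            omega
          · -- recursion via `Bad`
            have h1 : InA1N P M 1 xz := .blockEdge fr z' xz hb hxz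
            have hbad : Bad P M (1 + nv) := ⟨xz, ⟨z', hxz⟩, 1, nv, h1, hmv.1, rfl⟩
            rcases hor with ⟨-, hnv, hn2⟩ | hnv
            · exact hmin (1 + nv) (by omega) hbad
            · exact hmin (1 + nv) (by omega) hbad
      · push_neg at hzm
        have hz'N : ∀ u, (u, z') ∉ N := by
          intro u hu
          obtain ⟨u', hu'⟩ := st.s7 u z' hu
          exact hzm u' hu'
        set N' := insert (fr, z') N with hN'def
        have hfz : (fr, z') ∈ N' := Finset.mem_insert_self _ _
        have hmtch' : P.IsMatching N' := isMatching_insert st.mtch hb.1 st.s3x hz'N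
        have hgoodfr : P.prefA N' M fr := ⟨z', hfz, hb.2.2.1⟩
        have hgoodz' : P.prefB N' M z' := ⟨fr, hfz, hb.2.2.2⟩
        refine popFalse hpop hM hmtch' ?_ ?_ ?_ (Or.inl ⟨fr, hgoodfr, ?_, ?_⟩)
        · intro a c hcN hcM
          rcases Finset.mem_insert.1 hcN with h | h
          · cases h; exact Or.inl hb.2.2.1
          · exact st.s2 a c h hcM
        · intro w hwm hdef
          have hdef' : ∀ u, (u, w) ∉ N := fun u hu => hdef u (Finset.mem_insert_of_mem hu)
          obtain ⟨u, w', hum, hYu⟩ := st.s4 w hwm hdef'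
          exact ⟨u, w', hum, Finset.mem_insert_of_mem hYu.1, hYu.2.1,
            hYu.2.2.1, hYu.2.2.2.1⟩
        · intro v hvm hdef
          by_cases hvfr : v = fr
          · subst hvfr; exact absurd hfz (hdef z')
          · obtain ⟨c, hc⟩ := st.s3 v hvfr hvm
            exact absurd (Finset.mem_insert_of_mem hc) (hdef c)
        · intro bq hbq
          rcases Finset.mem_insert.1 hbq with h | h
          · cases h
            exact fun hp => prefB_asymm hp hgoodz'
          · exact absurd h (st.s3x bq)
        · intro bq hbq
          obtain ⟨a'', ha''⟩ := hwf bq hbq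
          exact ⟨a'', Finset.mem_insert_of_mem ha''⟩
  | stepUnmatched _ bb bb' hfm hbu hgm =>
      have hbN : ∀ u, (u, bb) ∉ N := by
        intro u hu
        obtain ⟨u', hu'⟩ := st.s7 u bb hu
        exact hbu u' hu'
      have hfrbbnm : (fr, bb) ∉ M := hbu fr
      set N' := insert (fr, bb) N with hN'def
      have hfb : (fr, bb) ∈ N' := Finset.mem_insert_self _ _
      have hmtch' : P.IsMatching N' := isMatching_insert st.mtch hgm.1 st.s3x hbN
      have hH2 : ∀ a c, (a, c) ∈ N' → (a, c) ∉ M →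
          P.voteAplus M a c ∨ P.voteBplus M a c := by
        intro a c hcN hcM
        rcases Finset.mem_insert.1 hcN with h | h
        · cases h; exact vote_of_inGM hgm hfrbbnm
        · exact st.s2 a c h hcM
      have hH3 : ∀ w, (∃ u, (u, w) ∈ M) → (∀ u, (u, w) ∉ N') →
          ∃ u w', (u, w) ∈ M ∧ (u, w') ∈ N' ∧ (u, w') ∉ M ∧
            P.voteAplus M u w' ∧ P.voteBplus M u w' := by
        intro w hwm hdef
        have hdef' : ∀ u, (u, w) ∉ N := fun u hu => hdef u (Finset.mem_insert_of_mem hu)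
        obtain ⟨u, w', hum, hYu⟩ := st.s4 w hwm hdef'
        exact ⟨u, w', hum, Finset.mem_insert_of_mem hYu.1, hYu.2.1,
          hYu.2.2.1, hYu.2.2.2.1⟩
      have hH4 : ∀ v, (∃ c, (v, c) ∈ M) → (∀ c, (v, c) ∉ N') →
          ∃ c a', (v, c) ∈ M ∧ (a', c) ∈ N' ∧ (a', c) ∉ M ∧
            P.voteAplus M a' c ∧ P.voteBplus M a' c := by
        intro v hvm hdef
        by_cases hvfr : v = fr
        · subst hvfr; exact absurd hfb (hdef bb)
        · obtain ⟨c, hc⟩ := st.s3 v hvfr hvm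
          exact absurd (Finset.mem_insert_of_mem hc) (hdef c)
      rcases st.s8 with hcard | ⟨v, w, hY⟩
      · refine domFalse hdom hM hmtch' ?_ hH2 hH3 hH4
        have h1 : (fr, bb) ∉ N := st.s3x bb
        rw [hN'def, Finset.card_insert_of_notMem h1, hcard]
        omega
      · have hwbb : w ≠ bb := by
          intro h
          rw [h] at hY
          exact hbN v hY.1
        have hgoodw : P.prefB N' M w :=
          ⟨v, Finset.mem_insert_of_mem hY.1, hY.2.2.2.1⟩
        have hgoodv : P.prefA N' M v :=
          ⟨w, Finset.mem_insert_of_mem hY.1, hY.2.2.1⟩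
        refine popFalse hpop hM hmtch' hH2 hH3 hH4 (Or.inr ⟨w, hgoodw, ?_, ?_⟩)
        · intro a haw
          rcases Finset.mem_insert.1 haw with h | h
          · exact absurd (congrArg Prod.snd h) hwbb
          · have : a = v := matchB_unique st.mtch h hY.1
            subst this
            exact fun hp => prefA_asymm hp hgoodv
        · intro a haw
          by_cases hafr : a = fr
          · subst hafr; exact ⟨bb, hfb⟩
          · obtain ⟨c, hc⟩ := st.s3 a hafr ⟨w, haw⟩
            exact ⟨c, Finset.mem_insert_of_mem hc⟩
  | step _ bb bb' c' m hfm hc' hc'b hgm =>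
      have hminc' : minA0 P M m c' := by
        refine ⟨hc', fun k hk => ?_⟩
        have := hf2 (k + 1) (.step fr bb bb' c' k hfm hk hc'b hgm)
        omega
      by_cases hcbN : (c', bb) ∈ N
      · -- clean flip, recurse
        have hfrc' : fr ≠ c' := fun h => st.s3x bb (h ▸ hcbN)
        have hfrbbnm : (fr, bb) ∉ M := fun h => hfrc' (matchB_unique hM h hc'b)
        set N' := insert (fr, bb) (N.erase (c', bb)) with hN'def
        have hmem : ∀ p : A × B, p ∈ N' ↔ p = (fr, bb) ∨ (p ∈ N ∧ p ≠ (c', bb)) :=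
          fun p => mem_insert_erase
        have hfb : (fr, bb) ∈ N' := (hmem _).2 (Or.inl rfl)
        have hmtch' : P.IsMatching N' := by
          refine isMatching_insert (isMatching_erase st.mtch _) hgm.1 ?_ ?_
          · intro c hc; exact st.s3x c (Finset.mem_of_mem_erase hc)
          · intro u hu
            have h1 := Finset.mem_of_mem_erase hu
            have h2 := Finset.ne_of_mem_erase hu
            exact h2 (by rw [matchB_unique st.mtch h1 hcbN])
        have st' : StA0 P M x n1 n0 c' m N' := by
          refine ⟨hmtch', ?_, ?_, ?_, ⟨bb, hc'b⟩, ?_, ?_, ?_, ?_, ?_⟩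
          · intro a c hcN hcM
            rcases (hmem _).1 hcN with h | ⟨h, -⟩
            · cases h; exact vote_of_inGM hgm hfrbbnm
            · exact st.s2 a c h hcM
          · intro v hv hvm
            by_cases hvfr : v = fr
            · subst hvfr; exact ⟨bb, hfb⟩
            · obtain ⟨c, hc⟩ := st.s3 v hvfr hvm
              exact ⟨c, (hmem _).2 (Or.inr ⟨hc, fun h => hv (congrArg Prod.fst h)⟩)⟩
          · intro c hc
            rcases (hmem _).1 hc with h | ⟨h, h1⟩
            · exact hfrc' (congrArg Prod.fst h).symm
            · exact h1 (by rw [matchA_unique st.mtch h hcbN])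
          · intro w hwm hdef
            by_cases hwb : w = bb
            · subst hwb; exact absurd hfb (hdef fr)
            · have hdef' : ∀ u, (u, w) ∉ N := by
                intro u hu
                exact hdef u ((hmem _).2 (Or.inr ⟨hu, fun h => hwb (congrArg Prod.snd h)⟩))
              obtain ⟨u, w', hum, hY⟩ := st.s4 w hwm hdef'
              exact ⟨u, w', hum, hY.swap hc'b hcbN⟩
          · intro a w hw
            rcases (hmem _).1 hw with h | ⟨h, -⟩
            · cases h; exact ⟨c', hc'b⟩
            · exact st.s7 a w h
          · have hcard : N'.card = N.card := by
              have h1 : (fr, bb) ∉ N.erase (c', bb) :=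
                fun h => st.s3x bb (Finset.mem_of_mem_erase h)
              have h2 : 1 ≤ N.card := Finset.card_pos.2 ⟨(c', bb), hcbN⟩
              rw [hN'def, Finset.card_insert_of_notMem h1, Finset.card_erase_of_mem hcbN]
              omega
            rcases st.s8 with h | ⟨v, w, hY⟩
            · left; rw [hcard, h]
            · right; exact ⟨v, w, hY.swap hc'b hcbN⟩
          · intro h
            obtain ⟨p, zz, hY, hxzz⟩ := st.s9 h
            exact ⟨p, zz, hY.swap hc'b hcbN, hxzz⟩
          · intro v c hvc hvcN
            by_cases hvc' : v = c'
            · exact Or.inl hvc'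
            · have hvcN0 : (v, c) ∉ N := by
                intro h
                exact hvcN ((hmem _).2 (Or.inr ⟨h, fun hh => hvc' (congrArg Prod.fst hh)⟩))
              rcases st.s5 v c hvc hvcN0 with h | ⟨p, hY⟩ | ⟨w', hY⟩ |
                ⟨nv, hmv, h2, hlt, cont⟩ | ⟨nv, hmv, hgt, hor⟩
              · -- v = fr : refile as history (or via s9 when n1 = 1)
                rcases hC with ⟨hfrx, hnfr⟩ | hlt0
                · by_cases hn1 : n1 = 1
                  · obtain ⟨p, zz, hY, hxzz⟩ := st.s9 hn1
                    have hvc2 : (x, c) ∈ M := by rw [← hfrx, ← h]; exact hvc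
                    have hczz : c = zz := matchA_unique hM hvc2 hxzz
                    subst hczz
                    exact Or.inr (Or.inl ⟨p, hY.swap hc'b hcbN⟩)
                  · refine Or.inr (Or.inr (Or.inr (Or.inr
                      ⟨m + 1, by rw [h]; exact ⟨.step fr bb bb' c' m hfm hc' hc'b hgm, hf2⟩,
                        by omega, Or.inl ⟨by rw [h, hfrx], by omega, by omega⟩⟩)))
                · refine Or.inr (Or.inr (Or.inr (Or.inr
                    ⟨m + 1, by rw [h]; exact ⟨.step fr bb bb' c' m hfm hc' hc'b hgm, hf2⟩,
                      by omega, Or.inr (by omega)⟩)))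
              · exact Or.inr (Or.inl ⟨p, hY.swap hc'b hcbN⟩)
              · exact Or.inr (Or.inr (Or.inl ⟨w', hY.swap hc'b hcbN⟩))
              · exact Or.inr (Or.inr (Or.inr (Or.inl ⟨nv, hmv, h2, hlt, cont⟩)))
              · exact Or.inr (Or.inr (Or.inr (Or.inr ⟨nv, hmv, by omega, hor⟩)))
        exact ih m (by omega) c' N' hminc' (by omega) (Or.inr (by omega)) st'
      · rcases st.s5 c' bb hc'b hcbN with h | ⟨p, hY⟩ | ⟨w'', hY⟩ |
          ⟨nv, hmv, h2, hlt, cont⟩ | ⟨nv, hmv, hgt, hor⟩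
        · -- c' = fr : contradicts minimality of `nfr`
          have hc'fr : InA0N P M m fr := by rw [← h]; exact hc'
          have := hf2 m hc'fr
          omega
        · have h1 : InA1N P M 1 c' := .blockEdge p bb c' (hY.blocking st.mtch) hc'b
          have hbad : Bad P M (1 + m) := ⟨c', ⟨bb, hc'b⟩, 1, m, h1, hc', rfl⟩
          exact hmin (1 + m) (by omega) hbad
        · -- stop construction
          have hbN : ∀ u, (u, bb) ∉ N := hY.2.2.2.2 bb hc'b
          have hfrc' : fr ≠ c' := fun h => st.s3x w'' (h ▸ hY.1)
          have hfrbbnm : (fr, bb) ∉ M := fun h => hfrc' (matchB_unique hM h hc'b)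
          set N' := insert (fr, bb) N with hN'def
          have hfb : (fr, bb) ∈ N' := Finset.mem_insert_self _ _
          have hmtch' : P.IsMatching N' := isMatching_insert st.mtch hgm.1 st.s3x hbN
          have hwbb : w'' ≠ bb := by
            intro h
            rw [h] at hY
            exact hbN c' hY.1
          have hgoodw : P.prefB N' M w'' :=
            ⟨c', Finset.mem_insert_of_mem hY.1, hY.2.2.2.1⟩
          have hgoodc' : P.prefA N' M c' :=
            ⟨w'', Finset.mem_insert_of_mem hY.1, hY.2.2.1⟩
          refine popFalse hpop hM hmtch' ?_ ?_ ?_ (Or.inr ⟨w'', hgoodw, ?_, ?_⟩)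
          · intro a c hcN hcM
            rcases Finset.mem_insert.1 hcN with h | h
            · cases h; exact vote_of_inGM hgm hfrbbnm
            · exact st.s2 a c h hcM
          · intro w hwm hdef
            have hdef' : ∀ u, (u, w) ∉ N := fun u hu => hdef u (Finset.mem_insert_of_mem hu)
            obtain ⟨u, w', hum, hYu⟩ := st.s4 w hwm hdef'
            exact ⟨u, w', hum, Finset.mem_insert_of_mem hYu.1, hYu.2.1,
              hYu.2.2.1, hYu.2.2.2.1⟩
          · intro v hvm hdef
            by_cases hvfr : v = fr
            · subst hvfr; exact absurd hfb (hdef bb)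
            · obtain ⟨c, hc⟩ := st.s3 v hvfr hvm
              exact absurd (Finset.mem_insert_of_mem hc) (hdef c)
          · intro a haw
            rcases Finset.mem_insert.1 haw with h | h
            · exact absurd (congrArg Prod.snd h) hwbb
            · have : a = c' := matchB_unique st.mtch h hY.1
              subst this
              exact fun hp => prefA_asymm hp hgoodc'
          · intro a haw
            by_cases hafr : a = fr
            · subst hafr; exact ⟨bb, hfb⟩
            · obtain ⟨c, hc⟩ := st.s3 a hafr ⟨w'', haw⟩
              exact ⟨c, Finset.mem_insert_of_mem hc⟩
        · have hbad : Bad P M (nv + m) := ⟨c', ⟨bb, hc'b⟩, nv, m, hmv.1, hc', rfl⟩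
          exact hmin (nv + m) (by omega) hbad
        · have := hmv.2 m hc'
          omega

end PrefSys

open PrefSys in
/-- for a dominant matching `M`, the sets `A₀` and `A₁` built by
the reachability procedure are disjoint. -/
theorem A0_A1_disjoint {A B : Type} [Fintype A] [Fintype B]
    (P : PrefSys A B) (M : Finset (A × B)) (hM : P.Dominant M) :
    ∀ a : A, ¬ (InA0 P M a ∧ InA1 P M a) := by
  rintro a ⟨h0, h1⟩
  obtain ⟨hpop, hdom⟩ := hM
  have hmat : P.IsMatching M := hpop.1
  by_cases ham : ∃ w, (a, w) ∈ M
  · obtain ⟨na1, ha1⟩ := h1.toN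
    obtain ⟨na0, ha0⟩ := h0.toN
    classical
    have hex : ∃ n, Bad P M n := ⟨na1 + na0, a, ham, na1, na0, ha1, ha0, rfl⟩
    obtain ⟨x, hxm, n1, n0, h1', h0', hsum⟩ := Nat.find_spec hex
    have hminbad : ∀ m, m < Nat.find hex → ¬ Bad P M m :=
      fun m hm => Nat.find_min hex hm
    obtain ⟨m1, hm1⟩ := exists_minA1 ⟨n1, h1'⟩
    obtain ⟨m0, hm0⟩ := exists_minA0 ⟨n0, h0'⟩
    have hbad2 : Bad P M (m1 + m0) := ⟨x, hxm, m1, m0, hm1.1, hm0.1, rfl⟩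
    have heq : m1 + m0 = Nat.find hex := by
      have hb1 := hm1.2 n1 h1'
      have hb0 := hm0.2 n0 h0'
      have hnot : ¬ (m1 + m0 < Nat.find hex) := fun h => hminbad _ h hbad2
      omega
    obtain ⟨N, st1⟩ := phaseA1 hmat hpop m1 x hm1 hxm
    have st0 : StA0 P M x m1 m0 x m0 N := st1.toStA0 hxm
    exact phaseA0 hmat hpop hdom hm1 hm0
      (fun m hm => hminbad m (by omega)) m0 x N hm0 le_rfl (Or.inl ⟨rfl, rfl⟩) st0
  · push_neg at ham
    cases h0 with
    | blockEdge _ z hb => exact unmatched_blocking_false hmat hpop ham hb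
    | stepUnmatched _ b b' hm1 _ _ => exact ham b' hm1
    | step _ b b' a' hm1 _ _ _ => exact ham b' hm1
end
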